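/- arXiv:2604.24713 — 4 statements merged into one kernel-verified Lean document; each statement's English description precedes it below -/
import Mathlib

section
/- Let (V, ⟨·,·⟩) be an ε-sesquilinear space over E which is either nondegenerate or has identically zero form. Since q is odd, V□ = V^Δ ⊕ V^∇, so for every T ∈ 𝔤_V there is a unique E-linear map exp(T) : V□ → V□ with exp(T)(v,v) = (v,v) and exp(T)(v,−v) = (Tv + v, Tv − v) for all v ∈ V. Then exp(T) ∈ Isom(V□) for every T ∈ 𝔤_V, and exp : (𝔤_V, +) → Isom(V□) is an injective group homomorphism whose image is exactly N^Δ; in particular |N^Δ| = |𝔤_V|. -/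
open scoped TensorProduct

noncomputable section

namespace Dbl

variable {E : Type*} [Field E]

/-- Axioms for an ε-sesquilinear form with respect to the involution `σ` and sign `ε`. -/
structure IsSesq (σ : E →+* E) (ε : E) {V : Type*} [AddCommGroup V] [Module E V]
    (B : V → V → E) : Prop where
  add_left : ∀ x₁ x₂ y : V, B (x₁ + x₂) y = B x₁ y + B x₂ y
  smul_left : ∀ (t : E) (x y : V), B (t • x) y = t * B x y
  conj_symm : ∀ x y : V, B y x = ε * σ (B x y)

/-- Nondegeneracy of a pairing. -/
def Nondeg {V : Type*} [AddCommGroup V] [Module E V] (B : V → V → E) : Prop :=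
  ∀ x : V, (∀ y : V, B x y = 0) → x = 0

/-- A submodule is totally isotropic for `B`. -/
def TotIso {V : Type*} [AddCommGroup V] [Module E V] (B : V → V → E)
    (U : Submodule E V) : Prop :=
  ∀ x ∈ U, ∀ y ∈ U, B x y = 0

/-- The doubled form on `V × V`. -/
def dblForm {V : Type*} [AddCommGroup V] [Module E V] (B : V → V → E) :
    V × V → V × V → E :=
  fun x y => B x.1 y.1 - B x.2 y.2

/-- The diagonal `V^Δ = {(v,v)}` of the doubling space. -/
def diagSub (E : Type*) [Field E] (V : Type*) [AddCommGroup V] [Module E V] :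
    Submodule E (V × V) where
  carrier := {p | p.1 = p.2}
  add_mem' := by
    intro a b ha hb
    simp only [Set.mem_setOf_eq, Prod.fst_add, Prod.snd_add] at *
    rw [ha, hb]
  zero_mem' := rfl
  smul_mem' := by
    intro c p hp
    simp only [Set.mem_setOf_eq, Prod.smul_fst, Prod.smul_snd] at *
    rw [hp]

/-- The antidiagonal `V^∇ = {(v,-v)}` of the doubling space. -/
def antidiagSub (E : Type*) [Field E] (V : Type*) [AddCommGroup V] [Module E V] :
    Submodule E (V × V) where
  carrier := {p | p.2 = -p.1}
  add_mem' := by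
    intro a b ha hb
    simp only [Set.mem_setOf_eq, Prod.fst_add, Prod.snd_add] at *
    rw [ha, hb, neg_add]
  zero_mem' := by simp
  smul_mem' := by
    intro c p hp
    simp only [Set.mem_setOf_eq, Prod.smul_fst, Prod.smul_snd] at *
    rw [hp, smul_neg]

/-- The isometry group of a pairing, as a subgroup of the group of linear
automorphisms. -/
def IsomGrp {V : Type*} [AddCommGroup V] [Module E V] (B : V → V → E) :
    Subgroup (V ≃ₗ[E] V) where
  carrier := {g | ∀ x y : V, B (g x) (g y) = B x y}
  one_mem' := fun _ _ => rfl
  mul_mem' := by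
    intro a b ha hb x y
    exact (ha (b x) (b y)).trans (hb x y)
  inv_mem' := by
    intro a ha x y
    have h := ha (a.symm x) (a.symm y)
    rw [a.apply_symm_apply, a.apply_symm_apply] at h
    exact h.symm


lemma mem_isom_iff {V : Type*} [AddCommGroup V] [Module E V] {B : V → V → E}
    {g : V ≃ₗ[E] V} : g ∈ IsomGrp B ↔ ∀ x y : V, B (g x) (g y) = B x y := Iff.rfl

variable {V : Type*} [AddCommGroup V] [Module E V]


/-- The product of two isometries is an isometry of the doubled form. -/
theorem prod_mem_isom {B : V → V → E} {g₁ g₂ : V ≃ₗ[E] V}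
    (h₁ : g₁ ∈ IsomGrp B) (h₂ : g₂ ∈ IsomGrp B) :
    g₁.prodCongr g₂ ∈ IsomGrp (dblForm B) := by
  rw [mem_isom_iff] at *
  intro x y
  show B (g₁ x.1) (g₁ y.1) - B (g₂ x.2) (g₂ y.2) = _
  rw [h₁ x.1 y.1, h₂ x.2 y.2]
  rfl

/-- The doubling embedding `i : Isom(V) × Isom(V) →* Isom(V□)`. -/
def iHom (B : V → V → E) : ↥(IsomGrp B) × ↥(IsomGrp B) →* ↥(IsomGrp (dblForm B)) where
  toFun p := ⟨(p.1 : V ≃ₗ[E] V).prodCongr (p.2 : V ≃ₗ[E] V), prod_mem_isom p.1.2 p.2.2⟩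
  map_one' := by
    apply Subtype.ext
    apply LinearEquiv.ext
    intro x
    rfl
  map_mul' := by
    intro p q
    apply Subtype.ext
    apply LinearEquiv.ext
    intro x
    rfl

/-- The stabilizer (as a subgroup of the linear automorphism group) of a submodule. -/
def stab {W : Type*} [AddCommGroup W] [Module E W] (U : Submodule E W) :
    Subgroup (W ≃ₗ[E] W) where
  carrier := {g | ∀ x : W, x ∈ U ↔ g x ∈ U}
  one_mem' := fun _ => Iff.rfl
  mul_mem' := by
    intro a b ha hb x
    exact (hb x).trans (ha (b x))
  inv_mem' := by
    intro a ha x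
    have h := ha (a.symm x)
    rw [a.apply_symm_apply] at h
    exact h.symm

/-- Restriction of an automorphism preserving `U` to an automorphism of `U`. -/
def resEquiv {W : Type*} [AddCommGroup W] [Module E W] (U : Submodule E W)
    (e : W ≃ₗ[E] W) (he : ∀ x : W, x ∈ U ↔ e x ∈ U) : ↥U ≃ₗ[E] ↥U where
  toFun u := ⟨e u, (he u).1 u.2⟩
  invFun u := ⟨e.symm u, by
    have h := he (e.symm (u : W))
    rw [e.apply_symm_apply] at h
    exact h.2 u.2⟩
  left_inv := fun u => Subtype.ext (by simp)
  right_inv := fun u => Subtype.ext (by simp)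
  map_add' := fun a b => Subtype.ext (by simp)
  map_smul' := fun c a => Subtype.ext (by simp)

/-- Restriction, as a group homomorphism. -/
def resMonoidHom {W : Type*} [AddCommGroup W] [Module E W] {G : Type*} [Group G]
    (φ : G →* (W ≃ₗ[E] W)) (U : Submodule E W)
    (h : ∀ (g : G) (x : W), x ∈ U ↔ φ g x ∈ U) : G →* (↥U ≃ₗ[E] ↥U) where
  toFun g := resEquiv U (φ g) (h g)
  map_one' := by
    apply LinearEquiv.ext
    intro u
    apply Subtype.ext
    show φ 1 (u : W) = _
    rw [map_one]
    rfl
  map_mul' := by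
    intro a b
    apply LinearEquiv.ext
    intro u
    apply Subtype.ext
    show φ (a * b) (u : W) = _
    rw [map_mul]
    rfl

/-- The "unipotent radical" subgroup attached to a chain of submodules. -/
def unipOf {W : Type*} [AddCommGroup W] [Module E W] (F : ℕ → Submodule E W)
    (hmono : Monotone F) (htop : ∃ N, F N = ⊤) : Subgroup (W ≃ₗ[E] W) where
  carrier := {g | ∀ n, ∀ v ∈ F (n + 1), g v - v ∈ F n}
  one_mem' := by
    intro n v _
    simp
  mul_mem' := by
    intro a b ha hb n v hv
    have hbv : b v ∈ F (n + 1) :=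
      by simpa using add_mem hv (hmono (Nat.le_succ n) (hb n v hv))
    have h1 : a (b v) - b v ∈ F n := ha n (b v) hbv
    have : (a * b) v - v = (a (b v) - b v) + (b v - v) := by
      show a (b v) - v = _
      abel
    rw [this]
    exact add_mem h1 (hb n v hv)
  inv_mem' := by
    intro a ha n v hv
    set w := a⁻¹ v with hwdef
    have hva : a w = v := a.apply_symm_apply v
    have key : ∀ j, w ∈ F (n + 1 + j) → w ∈ F (n + 1) := by
      intro j
      induction j with
      | zero => intro h; simpa using h
      | succ j ih =>
        intro hwj
        have h1 : a w - w ∈ F (n + 1 + j) := ha (n + 1 + j) w (by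
          have : n + 1 + j + 1 = n + 1 + (j + 1) := by omega
          rw [this]; exact hwj)
        have h2 : w = v - (a w - w) := by rw [hva]; abel
        have : w ∈ F (n + 1 + j) := by
          rw [h2]
          exact sub_mem (hmono (by omega) hv) h1
        exact ih this
    obtain ⟨N, hN⟩ := htop
    have hw1 : w ∈ F (n + 1) := by
      apply key N
      have hwN : w ∈ F N := by rw [hN]; trivial
      exact hmono (by omega) hwN
    have h3 := ha n w hw1
    have h4 : a⁻¹ v - v = -(a w - w) := by rw [hva]; abel
    rw [h4]
    exact neg_mem h3


variable {k : Type*} [Field k]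

/-- The right-translation representation on a right-translation invariant
submodule of functions `G → W`. -/
def rtRep {G : Type*} [Group G] {W : Type*} [AddCommGroup W] [Module k W]
    (C : Submodule k (G → W))
    (hC : ∀ (x : G), ∀ f ∈ C, (fun g => f (g * x)) ∈ C) :
    Representation k G ↥C where
  toFun x :=
    { toFun := fun f => ⟨fun g => (f : G → W) (g * x), hC x f f.2⟩
      map_add' := by intro f f'; apply Subtype.ext; funext g; rfl
      map_smul' := by intro c f; apply Subtype.ext; funext g; rfl }
  map_one' := by
    apply LinearMap.ext
    intro f
    apply Subtype.ext
    funext g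
    simp
  map_mul' := by
    intro x y
    apply LinearMap.ext
    intro f
    apply Subtype.ext
    funext g
    show (f : G → W) (g * (x * y)) = (f : G → W) (g * x * y)
    rw [mul_assoc]

/-- The space of `G`-equivariant `k`-linear maps between two representations. -/
def repHom {G : Type*} [Group G] {W₁ W₂ : Type*} [AddCommGroup W₁] [Module k W₁]
    [AddCommGroup W₂] [Module k W₂]
    (ρ : Representation k G W₁) (τ : Representation k G W₂) :
    Submodule k (W₁ →ₗ[k] W₂) where
  carrier := {T | ∀ g : G, T ∘ₗ ρ g = τ g ∘ₗ T}
  zero_mem' := by intro g; simp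
  add_mem' := by
    intro T S hT hS g
    simp only [LinearMap.add_comp, LinearMap.comp_add, hT g, hS g]
  smul_mem' := by
    intro c T hT g
    simp only [LinearMap.smul_comp, LinearMap.comp_smul, hT g]

/-- Irreducibility of a representation. -/
def RepIrred {G : Type*} [Group G] {W : Type*} [AddCommGroup W] [Module k W]
    (ρ : Representation k G W) : Prop :=
  Nontrivial W ∧
    ∀ U : Submodule k W, (∀ (g : G), ∀ w ∈ U, ρ g w ∈ U) → U = ⊥ ∨ U = ⊤

/-- `π` is (isomorphic to) a subrepresentation of `ρ`. -/
def IsSubrep {G : Type*} [Group G] {W₁ W₂ : Type*} [AddCommGroup W₁] [Module k W₁]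
    [AddCommGroup W₂] [Module k W₂]
    (π : Representation k G W₁) (ρ : Representation k G W₂) : Prop :=
  ∃ ι : W₁ →ₗ[k] W₂, Function.Injective ι ∧ ∀ g : G, ι ∘ₗ π g = ρ g ∘ₗ ι

/-- The carrier of the (parabolically) induced representation: functions
`f : G → W` with `f (u * l * g) = σ l (f g)` for `u` in the unipotent radical
`N` and `l` in the Levi subgroup `L`. -/
def indCarrier {G : Type*} [Group G] (N L : Subgroup G) {W : Type*}
    [AddCommGroup W] [Module k W] (σL : Representation k ↥L W) :
    Submodule k (G → W) where
  carrier := {f | ∀ u ∈ N, ∀ (l : ↥L) (g : G), f (u * ↑l * g) = σL l (f g)}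
  zero_mem' := by intro u hu l g; simp
  add_mem' := by
    intro f f' hf hf' u hu l g
    simp only [Pi.add_apply, hf u hu l g, hf' u hu l g, map_add]
  smul_mem' := by
    intro c f hf u hu l g
    simp only [Pi.smul_apply, hf u hu l g, map_smul]

theorem indCarrier_rt {G : Type*} [Group G] (N L : Subgroup G) {W : Type*}
    [AddCommGroup W] [Module k W] (σL : Representation k ↥L W) :
    ∀ (x : G), ∀ f ∈ indCarrier N L σL, (fun g => f (g * x)) ∈ indCarrier N L σL := by
  intro x f hf u hu l g
  have := hf u hu l (g * x)
  simpa [mul_assoc] using this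

/-- The induced representation. -/
def indRep {G : Type*} [Group G] (N L : Subgroup G) {W : Type*}
    [AddCommGroup W] [Module k W] (σL : Representation k ↥L W) :
    Representation k G ↥(indCarrier N L σL) :=
  rtRep (indCarrier N L σL) (indCarrier_rt N L σL)


variable {W : Type*} [AddCommGroup W] [Module E W]

/-- The determinant of the restriction of `e` to the invariant submodule `U`. -/
def detRes (U : Submodule E W) (e : W ≃ₗ[E] W)
    (he : ∀ x : W, x ∈ U ↔ e x ∈ U) : E :=
  LinearMap.det ((resEquiv U e he : ↥U ≃ₗ[E] ↥U) : ↥U →ₗ[E] ↥U)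

/-- The determinant of the map induced by `e` on the quotient `W ⧸ U`. -/
def detQuot (U : Submodule E W) (e : W ≃ₗ[E] W)
    (he : ∀ x : W, x ∈ U ↔ e x ∈ U) : E :=
  LinearMap.det (Submodule.mapQ U U (e : W →ₗ[E] W)
    (fun x hx => Submodule.mem_comap.mpr ((he x).1 hx)))

/-- Degenerate principal series, nondegenerate case: functions `f` on the group `G`
(mapped into the automorphisms of `W` by `φ`) satisfying
`f (p * g) = χ(det (p|Δ)) * f g` for all `p` stabilizing `Δ`. -/
def degPSnd {G : Type*} [Group G] (φ : G →* (W ≃ₗ[E] W)) (Δ : Submodule E W)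
    (χ : E →* k) : Submodule k (G → k) where
  carrier := {f | ∀ (p : G) (hp : ∀ x : W, x ∈ Δ ↔ φ p x ∈ Δ) (g : G),
    f (p * g) = χ (detRes Δ (φ p) hp) * f g}
  zero_mem' := by intro p hp g; simp
  add_mem' := by
    intro f f' hf hf' p hp g
    simp only [Pi.add_apply, hf p hp g, hf' p hp g]
    ring
  smul_mem' := by
    intro c f hf p hp g
    simp only [Pi.smul_apply, hf p hp g, smul_eq_mul]
    ring

/-- Degenerate principal series, identically-zero-form case: the extra factor
`χ^{-c}(det p̄)` appears, where `p̄` is induced on `W ⧸ Δ`. -/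
def degPSz (σc : E →+* E) {G : Type*} [Group G] (φ : G →* (W ≃ₗ[E] W))
    (Δ : Submodule E W) (χ : E →* k) : Submodule k (G → k) where
  carrier := {f | ∀ (p : G) (hp : ∀ x : W, x ∈ Δ ↔ φ p x ∈ Δ) (g : G),
    f (p * g) = χ (detRes Δ (φ p) hp) * (χ (σc (detQuot Δ (φ p) hp)))⁻¹ * f g}
  zero_mem' := by intro p hp g; simp
  add_mem' := by
    intro f f' hf hf' p hp g
    simp only [Pi.add_apply, hf p hp g, hf' p hp g]
    ring
  smul_mem' := by
    intro c f hf p hp g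
    simp only [Pi.smul_apply, hf p hp g, smul_eq_mul]
    ring

theorem degPSnd_rt {G : Type*} [Group G] (φ : G →* (W ≃ₗ[E] W)) (Δ : Submodule E W)
    (χ : E →* k) :
    ∀ (x : G), ∀ f ∈ degPSnd φ Δ χ, (fun g => f (g * x)) ∈ degPSnd φ Δ χ := by
  intro x f hf p hp g
  have := hf p hp (g * x)
  simpa [mul_assoc] using this

theorem degPSz_rt (σc : E →+* E) {G : Type*} [Group G] (φ : G →* (W ≃ₗ[E] W))
    (Δ : Submodule E W) (χ : E →* k) :
    ∀ (x : G), ∀ f ∈ degPSz σc φ Δ χ, (fun g => f (g * x)) ∈ degPSz σc φ Δ χ := by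
  intro x f hf p hp g
  have := hf p hp (g * x)
  simpa [mul_assoc] using this

/-- The right-translation representation on the degenerate principal series
(nondegenerate case). -/
def degPSndRep {G : Type*} [Group G] (φ : G →* (W ≃ₗ[E] W)) (Δ : Submodule E W)
    (χ : E →* k) : Representation k G ↥(degPSnd φ Δ χ) :=
  rtRep (degPSnd φ Δ χ) (degPSnd_rt φ Δ χ)

/-- The right-translation representation on the degenerate principal series
(zero-form case). -/
def degPSzRep (σc : E →+* E) {G : Type*} [Group G] (φ : G →* (W ≃ₗ[E] W))
    (Δ : Submodule E W) (χ : E →* k) : Representation k G ↥(degPSz σc φ Δ χ) :=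
  rtRep (degPSz σc φ Δ χ) (degPSz_rt σc φ Δ χ)

end Dbl
namespace Dbl
variable {E : Type*} [Field E] {V : Type*} [AddCommGroup V] [Module E V]

/-- The linear map on `V × V` underlying the exponential of `T ∈ 𝔤_V`. -/
def expLin (T : V →ₗ[E] V) : (V × V) →ₗ[E] (V × V) where
  toFun x := (x.1 + (2 : E)⁻¹ • T (x.1 - x.2), x.2 + (2 : E)⁻¹ • T (x.1 - x.2))
  map_add' := by
    intro x y
    apply Prod.ext <;>
      (simp only [Prod.fst_add, Prod.snd_add, map_add, map_sub, smul_add, smul_sub]; abel)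
  map_smul' := by
    intro c x
    apply Prod.ext <;>
      simp only [Prod.smul_fst, Prod.smul_snd, map_smul, map_sub, smul_sub,
        RingHom.id_apply, smul_add, smul_comm c]

theorem expLin_comp (T : V →ₗ[E] V) : expLin T ∘ₗ expLin (-T) = LinearMap.id := by
  apply LinearMap.ext
  intro x
  have hd : ((expLin (-T)) x).1 - ((expLin (-T)) x).2 = x.1 - x.2 := by
    simp [expLin]
  apply Prod.ext <;>
    (simp only [LinearMap.comp_apply, LinearMap.id_apply]
     show _ + (2:E)⁻¹ • T (((expLin (-T)) x).1 - ((expLin (-T)) x).2) = _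
     rw [hd]
     simp only [expLin, LinearMap.coe_mk, AddHom.coe_mk, LinearMap.neg_apply, smul_neg]
     abel)

/-- The exponential `exp(T)` of `T` as a linear automorphism of `V × V`. -/
def expEquiv (T : V →ₗ[E] V) : (V × V) ≃ₗ[E] (V × V) :=
  LinearEquiv.ofLinear (expLin T) (expLin (-T)) (expLin_comp T)
    (by simpa using expLin_comp (-T))

end Dbl

section StmtAux

variable {E : Type*} [Field E] {V : Type*} [AddCommGroup V] [Module E V]

lemma expEquiv_apply' (T : V →ₗ[E] V) (x : V × V) :
    Dbl.expEquiv T x =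
      (x.1 + (2 : E)⁻¹ • T (x.1 - x.2), x.2 + (2 : E)⁻¹ • T (x.1 - x.2)) := rfl

lemma half_smul_two (h2 : (2 : E) ≠ 0) (v : V) : (2 : E)⁻¹ • (v + v) = v := by
  rw [← two_smul E v, smul_smul, inv_mul_cancel₀ h2, one_smul]

lemma expEquiv_diag (T : V →ₗ[E] V) (v : V) : Dbl.expEquiv T (v, v) = (v, v) := by
  rw [expEquiv_apply']
  simp

lemma expEquiv_anti (h2 : (2 : E) ≠ 0) (T : V →ₗ[E] V) (v : V) :
    Dbl.expEquiv T (v, -v) = (T v + v, T v - v) := by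
  rw [expEquiv_apply']
  have hd : v - -v = v + v := by abel
  rw [hd, map_add, half_smul_two h2 (T v)]
  apply Prod.ext
  · show v + T v = T v + v
    abel
  · show -v + T v = T v - v
    abel

lemma ext_of_diag_anti (h2 : (2 : E) ≠ 0) {S S' : (V × V) →ₗ[E] (V × V)}
    (hd : ∀ v : V, S (v, v) = S' (v, v)) (ha : ∀ v : V, S (v, -v) = S' (v, -v)) :
    S = S' := by
  apply LinearMap.ext
  intro x
  obtain ⟨x1, x2⟩ := x
  set a := (2 : E)⁻¹ • (x1 + x2) with hadef
  set b := (2 : E)⁻¹ • (x1 - x2) with hbdef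
  have hx : ((x1, x2) : V × V) = (a, a) + (b, -b) := by
    have h1 : a + b = x1 := by
      rw [hadef, hbdef, ← smul_add]
      have : x1 + x2 + (x1 - x2) = x1 + x1 := by abel
      rw [this, half_smul_two h2]
    have h2' : a + -b = x2 := by
      rw [hadef, hbdef, ← smul_neg, ← smul_add]
      have : x1 + x2 + -(x1 - x2) = x2 + x2 := by abel
      rw [this, half_smul_two h2]
    exact Prod.ext h1.symm h2'.symm
  rw [hx, map_add, map_add, hd a, ha b]

variable {σ : E →+* E} {ε : E} {B : V → V → E}

lemma sesq_zero_left (hB : Dbl.IsSesq σ ε B) (y : V) : B 0 y = 0 := by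
  have := hB.smul_left 0 0 y
  simpa using this

lemma sesq_add_right (hB : Dbl.IsSesq σ ε B) (x y z : V) :
    B x (y + z) = B x y + B x z := by
  rw [hB.conj_symm (y + z) x, hB.add_left, map_add, mul_add,
    ← hB.conj_symm y x, ← hB.conj_symm z x]

lemma sesq_smul_right (hB : Dbl.IsSesq σ ε B) (t : E) (x y : V) :
    B x (t • y) = σ t * B x y := by
  rw [hB.conj_symm (t • y) x, hB.smul_left, map_mul, mul_left_comm,
    ← hB.conj_symm y x]

lemma sesq_neg_left (hB : Dbl.IsSesq σ ε B) (x y : V) : B (-x) y = -B x y := by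
  have h := hB.add_left x (-x) y
  rw [add_neg_cancel, sesq_zero_left hB] at h
  linear_combination -h

lemma sesq_sub_left (hB : Dbl.IsSesq σ ε B) (x y z : V) :
    B (x - y) z = B x z - B y z := by
  rw [sub_eq_add_neg, hB.add_left, sesq_neg_left hB, sub_eq_add_neg]

lemma sesq_neg_right (hB : Dbl.IsSesq σ ε B) (x y : V) : B x (-y) = -B x y := by
  rw [hB.conj_symm (-y) x, sesq_neg_left hB, map_neg, mul_neg,
    ← hB.conj_symm y x]

lemma sesq_sub_right (hB : Dbl.IsSesq σ ε B) (x y z : V) :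
    B x (y - z) = B x y - B x z := by
  rw [sub_eq_add_neg, sesq_add_right hB, sesq_neg_right hB, sub_eq_add_neg]

lemma sigma_half (σ : E →+* E) : σ (2 : E)⁻¹ = (2 : E)⁻¹ := by
  rw [map_inv₀, map_ofNat]

/-- The key isometry computation. -/
lemma expEquiv_isom (hB : Dbl.IsSesq σ ε B) (h2 : (2 : E) ≠ 0)
    {T : V →ₗ[E] V} (hT : ∀ x y : V, B (T x) y + B x (T y) = 0) :
    Dbl.expEquiv T ∈ Dbl.IsomGrp (Dbl.dblForm B) := by
  intro x y
  rw [expEquiv_apply', expEquiv_apply']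
  set w := (2 : E)⁻¹ • T (x.1 - x.2) with hw
  set w' := (2 : E)⁻¹ • T (y.1 - y.2) with hw'
  show B (x.1 + w) (y.1 + w') - B (x.2 + w) (y.2 + w') = B x.1 y.1 - B x.2 y.2
  have key : B (x.1 - x.2) w' + B w (y.1 - y.2) = 0 := by
    rw [hw, hw', sesq_smul_right hB, hB.smul_left, sigma_half σ]
    linear_combination (2 : E)⁻¹ * hT (x.1 - x.2) (y.1 - y.2)
  have e := key
  rw [sesq_sub_left hB, sesq_sub_right hB] at e
  rw [hB.add_left, hB.add_left, sesq_add_right hB, sesq_add_right hB,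
    sesq_add_right hB, sesq_add_right hB]
  linear_combination e

end StmtAux

/-- the exponential map identifies the Lie algebra `𝔤_V` with the
unipotent radical `N^Δ` of the Siegel parabolic subgroup. -/
theorem statement2
    {E : Type*} [Field E] [Finite E] (σ : E →+* E) (hinv : ∀ x : E, σ (σ x) = x)
    (ε : E) (hε : ε = 1 ∨ ε = -1) (hεE : σ ≠ RingHom.id E → ε = 1)
    (h2 : (2 : E) ≠ 0)
    {V : Type*} [AddCommGroup V] [Module E V] [FiniteDimensional E V]
    (B : V → V → E) (hB : Dbl.IsSesq σ ε B)
    (hV : Dbl.Nondeg B ∨ ∀ x y : V, B x y = 0)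
    (𝔤 : Set (V →ₗ[E] V)) (h𝔤 : 𝔤 = {A | ∀ x y : V, B (A x) y + B x (A y) = 0})
    (NΔ : Set ((V × V) ≃ₗ[E] (V × V)))
    (hNΔ : NΔ = {u | u ∈ Dbl.IsomGrp (Dbl.dblForm B) ∧
      (∀ v ∈ Dbl.diagSub E V, u v = v) ∧
      (∀ v : V × V, u v - v ∈ Dbl.diagSub E V)}) :
    (∀ T ∈ 𝔤,
      (∀ v : V, Dbl.expEquiv T (v, v) = (v, v)) ∧
      (∀ v : V, Dbl.expEquiv T (v, -v) = (T v + v, T v - v)) ∧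
      (∀ S : (V × V) →ₗ[E] (V × V), (∀ v : V, S (v, v) = (v, v)) →
        (∀ v : V, S (v, -v) = (T v + v, T v - v)) →
        S = (Dbl.expEquiv T : (V × V) →ₗ[E] (V × V)))) ∧
    (∀ T ∈ 𝔤, Dbl.expEquiv T ∈ Dbl.IsomGrp (Dbl.dblForm B)) ∧
    Set.InjOn (fun T : V →ₗ[E] V => Dbl.expEquiv T) 𝔤 ∧
    (∀ T₁ ∈ 𝔤, ∀ T₂ ∈ 𝔤,
      Dbl.expEquiv (T₁ + T₂) = Dbl.expEquiv T₁ * Dbl.expEquiv T₂) ∧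
    (fun T : V →ₗ[E] V => Dbl.expEquiv T) '' 𝔤 = NΔ ∧
    Nat.card NΔ = Nat.card 𝔤 := by
  subst h𝔤; subst hNΔ
  have hinj : Set.InjOn (fun T : V →ₗ[E] V => Dbl.expEquiv T) {A | ∀ x y : V, B (A x) y + B x (A y) = 0} := by
    intro T₁ _ T₂ _ h
    ext v
    have h1 := congrArg (fun e : (V × V) ≃ₗ[E] (V × V) => e (v, -v)) h
    simp only at h1
    rw [expEquiv_anti h2, expEquiv_anti h2] at h1
    have h2' := congrArg Prod.fst h1
    exact add_right_cancel h2'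
  have himg : (fun T : V →ₗ[E] V => Dbl.expEquiv T) '' {A | ∀ x y : V, B (A x) y + B x (A y) = 0}
      = {u | u ∈ Dbl.IsomGrp (Dbl.dblForm B) ∧
        (∀ v ∈ Dbl.diagSub E V, u v = v) ∧
        (∀ v : V × V, u v - v ∈ Dbl.diagSub E V)} := by
    ext u
    constructor
    · rintro ⟨T, hT, rfl⟩
      refine ⟨expEquiv_isom hB h2 hT, ?_, ?_⟩
      · rintro ⟨v1, v2⟩ hv
        have hv' : v1 = v2 := hv
        subst hv'
        exact expEquiv_diag T v1
      · intro v
        show (Dbl.expEquiv T v - v).1 = (Dbl.expEquiv T v - v).2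
        rw [expEquiv_apply']
        simp
    · rintro ⟨hiso, hfix, hdiff⟩
      set T : V →ₗ[E] V :=
        { toFun := fun v => (u (v, -v)).1 - v
          map_add' := by
            intro a b
            have h : ((a + b, -(a + b)) : V × V) = (a, -a) + (b, -b) := by
              apply Prod.ext
              · rfl
              · show -(a + b) = -a + -b
                abel
            simp only [h, map_add, Prod.fst_add]
            abel
          map_smul' := by
            intro c a
            have h : ((c • a, -(c • a)) : V × V) = c • (a, -a) := by
              apply Prod.ext
              · rfl
              · show -(c • a) = c • (-a)
                rw [smul_neg]
            simp only [h, map_smul, Prod.smul_fst, RingHom.id_apply, smul_sub] } with hTdef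
      have hu_anti : ∀ v : V, u (v, -v) = (T v + v, T v - v) := by
        intro v
        have h : (u (v, -v) - (v, -v)).1 = (u (v, -v) - (v, -v)).2 := hdiff (v, -v)
        simp only [Prod.fst_sub, Prod.snd_sub, sub_neg_eq_add] at h
        have hT1 : T v + v = (u (v, -v)).1 := by
          show (u (v, -v)).1 - v + v = _
          abel
        have hT2 : T v - v = (u (v, -v)).2 := by
          show (u (v, -v)).1 - v - v = _
          rw [h]
          abel
        exact (Prod.ext hT1 hT2).symm
      have hT𝔤 : T ∈ {A : V →ₗ[E] V | ∀ x y : V, B (A x) y + B x (A y) = 0} := by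
        intro x y
        have h := hiso (x, -x) (y, -y)
        rw [hu_anti x, hu_anti y] at h
        have hrhs : Dbl.dblForm B (x, -x) (y, -y) = 0 := by
          show B x y - B (-x) (-y) = 0
          rw [sesq_neg_left hB, sesq_neg_right hB]
          ring
        rw [hrhs] at h
        have hlhs : Dbl.dblForm B (T x + x, T x - x) (T y + y, T y - y)
            = 2 * (B (T x) y + B x (T y)) := by
          show B (T x + x) (T y + y) - B (T x - x) (T y - y) = _
          rw [hB.add_left, sesq_add_right hB, sesq_add_right hB,
            sesq_sub_left hB, sesq_sub_right hB, sesq_sub_right hB]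
          ring
        rw [hlhs] at h
        exact (mul_eq_zero.mp h).resolve_left h2
      refine ⟨T, hT𝔤, ?_⟩
      apply LinearEquiv.toLinearMap_injective
      apply ext_of_diag_anti h2
      · intro v
        simp only [LinearEquiv.coe_coe]
        rw [expEquiv_diag T v]
        exact (hfix (v, v) rfl).symm
      · intro v
        simp only [LinearEquiv.coe_coe]
        rw [expEquiv_anti h2 T v]
        exact (hu_anti v).symm
  refine ⟨?_, ?_, hinj, ?_, himg, ?_⟩
  · intro T hT
    refine ⟨fun v => expEquiv_diag T v, fun v => expEquiv_anti h2 T v, ?_⟩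
    intro S hSd hSa
    apply ext_of_diag_anti h2
    · intro v
      simp only [LinearEquiv.coe_coe]
      rw [hSd v, expEquiv_diag]
    · intro v
      simp only [LinearEquiv.coe_coe]
      rw [hSa v, expEquiv_anti h2]
  · intro T hT
    exact expEquiv_isom hB h2 hT
  · intro T₁ _ T₂ _
    apply LinearEquiv.toLinearMap_injective
    apply LinearMap.ext
    intro x
    show Dbl.expEquiv (T₁ + T₂) x = Dbl.expEquiv T₁ (Dbl.expEquiv T₂ x)
    rw [expEquiv_apply' T₂, expEquiv_apply' (T₁ + T₂), expEquiv_apply' T₁]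
    simp only [LinearMap.add_apply]
    have hd : (x.1 + (2 : E)⁻¹ • T₂ (x.1 - x.2)) - (x.2 + (2 : E)⁻¹ • T₂ (x.1 - x.2))
        = x.1 - x.2 := by abel
    apply Prod.ext
    · show x.1 + (2 : E)⁻¹ • (T₁ (x.1 - x.2) + T₂ (x.1 - x.2)) = _
      rw [hd, smul_add]
      abel
    · show x.2 + (2 : E)⁻¹ • (T₁ (x.1 - x.2) + T₂ (x.1 - x.2)) = _
      rw [hd, smul_add]
      abel
  · rw [← himg, Nat.card_image_of_injOn hinj]
end
end

section
/- Let F be a field with char F ≠ 2, let d ≥ 1, let w ∈ GL_d(F) be the permutation matrix with ones on the antidiagonal, let ε ∈ {1, −1}, let S ∈ GL_d(F) satisfy Sᵀ = ε·w·S·w, and let X ∈ M_d(F) satisfy X·w + ε·w·Xᵀ = 0. Then det(2SX + I_d) = det(I_d − 2SX). In particular, if det(2SX − I_d) ≠ 0 then the Cayley image (I_d + 2SX)(I_d − 2SX)^{-1} lies in SL_d(F). -/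
/-- for `S` with `Sᵀ = ε·w·S·w` and `X` with `X·w + ε·w·Xᵀ = 0`
over a field of characteristic `≠ 2`, one has `det(2SX + I) = det(I − 2SX)`;
in particular the Cayley image of `X` has determinant `1` when defined. -/
theorem statement10 {F : Type*} [Field F] (h2 : (2 : F) ≠ 0)
    (d : ℕ) (hd : 1 ≤ d)
    (w : Matrix (Fin d) (Fin d) F)
    (hw : w = Matrix.of fun i j : Fin d => if j = i.rev then (1 : F) else 0)
    (ε : F) (hε : ε = 1 ∨ ε = -1)
    (S : Matrix (Fin d) (Fin d) F) (hS : S.transpose = ε • (w * S * w))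
    (hSu : IsUnit S.det)
    (X : Matrix (Fin d) (Fin d) F) (hX : X * w + ε • (w * X.transpose) = 0) :
    ((2 : F) • (S * X) + 1).det = (1 - (2 : F) • (S * X)).det ∧
    (((2 : F) • (S * X) - 1).det ≠ 0 →
      ((1 + (2 : F) • (S * X)) * (1 - (2 : F) • (S * X))⁻¹).det = 1) := by
  have hε2 : ε * ε = 1 := by rcases hε with h | h <;> rw [h] <;> ring
  have hw2 : w * w = 1 := by
    subst hw
    ext i j
    simp only [Matrix.mul_apply, Matrix.of_apply, Matrix.one_apply]
    rw [Finset.sum_eq_single i.rev]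
    · simp [Fin.rev_eq_iff, eq_comm]
    · intro b _ hb; simp [hb]
    · simp
  -- Xᵀ = -(ε • (w * X * w))
  have h1 : ε • (w * X.transpose) = -(X * w) := by linear_combination (norm := abel) hX
  have hw2' : ∀ M : Matrix (Fin d) (Fin d) F, w * (w * M) = M := fun M => by
    rw [← Matrix.mul_assoc, hw2, Matrix.one_mul]
  have hXt : X.transpose = -(ε • (w * X * w)) := by
    have h3 : w * (ε • (w * X.transpose)) = w * (-(X * w)) := congrArg _ h1
    rw [Matrix.mul_smul, ← Matrix.mul_assoc, hw2, Matrix.one_mul, Matrix.mul_neg] at h3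
    calc X.transpose = (ε * ε) • X.transpose := by rw [hε2, one_smul]
      _ = ε • (ε • X.transpose) := by rw [smul_smul]
      _ = ε • (-(w * X * w)) := by rw [h3, Matrix.mul_assoc]
      _ = -(ε • (w * X * w)) := by rw [smul_neg]
  -- transpose of 2•(S*X)
  have hAt : ((2 : F) • (S * X)).transpose = -((2 : F) • (w * (X * S) * w)) := by
    rw [Matrix.transpose_smul, Matrix.transpose_mul, hXt, hS]
    rw [Matrix.neg_mul, Matrix.smul_mul, Matrix.mul_smul, smul_smul, hε2, one_smul]
    congr 2
    simp [Matrix.mul_assoc, hw2']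
  have key : ((2 : F) • (S * X) + 1).det = (1 - (2 : F) • (S * X)).det := by
    calc ((2 : F) • (S * X) + 1).det
        = (((2 : F) • (S * X) + 1).transpose).det := (Matrix.det_transpose _).symm
      _ = (1 - (2 : F) • (w * (X * S) * w)).det := by
          rw [Matrix.transpose_add, hAt, Matrix.transpose_one]
          congr 1; abel
      _ = (w * (1 - (2 : F) • (X * S)) * w).det := by
          congr 1
          rw [Matrix.mul_sub, Matrix.sub_mul, Matrix.mul_one, hw2, Matrix.mul_smul,
            Matrix.smul_mul]
      _ = (1 - (2 : F) • (X * S)).det := by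
          rw [Matrix.det_mul, Matrix.det_mul, mul_comm, ← mul_assoc, ← Matrix.det_mul,
            hw2, Matrix.det_one, one_mul]
      _ = (1 - (2 : F) • (S * X)).det := by
          have := Matrix.det_one_sub_mul_comm ((2 : F) • X) S
          rwa [Matrix.smul_mul, Matrix.mul_smul] at this
  refine ⟨key, fun hne => ?_⟩
  have hne' : (1 - (2 : F) • (S * X)).det ≠ 0 := by
    intro h
    apply hne
    have : ((2:F) • (S * X) - 1) = -(1 - (2:F) • (S * X)) := by abel
    rw [this, Matrix.det_neg, h, mul_zero]
  rw [Matrix.det_mul, Matrix.det_nonsing_inv, Ring.inverse_eq_inv, add_comm, key,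
    mul_inv_cancel₀ hne']
end

section
/- Let (V, ⟨·,·⟩) be a nondegenerate ε-sesquilinear space over E with dim_E V = d, let χ : Eˣ → kˣ be a character, let (π, W) be an irreducible finite-dimensional representation of Isom(V) over k, and let ω_π(−1) ∈ kˣ be the scalar by which the central element π(−id_V) acts on W. Then Z_{V,χ,π}(f₀) = id_W, and Z_{V,χ^{-c},π}(M_χ f₀) = ω_π(−1) · χ(−2)^{−d} · j^{dbl}(π,χ) · id_W. Consequently, the finite doubling gamma factor Γ^{dbl}(π×χ), defined by Z_{V,χ^{-c},π}(M_χ f₀) = Γ^{dbl}(π×χ)·id_W, equals ω_π(−1) · χ(−2)^{−d} · j^{dbl}(π,χ). -/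
open scoped TensorProduct

noncomputable section

namespace Dbl

variable {E : Type*} [Field E] {k : Type*} [Field k]

/-- The character `χ^{-c} : x ↦ χ(x̄)⁻¹`. -/
noncomputable def chiMC (σ : E →+* E) (χ : E →* k) : E →* k where
  toFun x := (χ (σ x))⁻¹
  map_one' := by simp
  map_mul' := by
    intro a b
    show (χ (σ (a * b)))⁻¹ = (χ (σ a))⁻¹ * (χ (σ b))⁻¹
    rw [map_mul, map_mul, mul_inv]

variable {V : Type*} [AddCommGroup V] [Module E V]

/-- The determinant of a linear automorphism. -/
noncomputable def detE (h : V ≃ₗ[E] V) : E := LinearMap.det (h : V →ₗ[E] V)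

end Dbl

open scoped BigOperators
open Classical

set_option maxHeartbeats 1000000

namespace DblAux

open Dbl

variable {E : Type*} [Field E] {V : Type*} [AddCommGroup V] [Module E V]
variable {σ : E →+* E} {ε : E} {B : V → V → E}

section Sesq

variable (hinv : ∀ x : E, σ (σ x) = x) (hε : ε = 1 ∨ ε = -1) (hB : IsSesq σ ε B)
include hinv hε hB
set_option linter.unusedSectionVars false

lemma eps_sigma : ∀ x y : V, ε * σ (B y x) = B x y := by
  intro x y
  rw [hB.conj_symm x y, map_mul, hinv]
  have hσε : σ ε = ε := by rcases hε with h | h <;> simp [h]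
  rw [hσε, ← mul_assoc]
  rcases hε with h | h <;> simp [h]

lemma sesq_add_right (x y z : V) : B x (y + z) = B x y + B x z := by
  rw [hB.conj_symm (y + z) x, hB.add_left, map_add, mul_add,
    eps_sigma hinv hε hB, eps_sigma hinv hε hB]

lemma sesq_smul_right (t : E) (x y : V) : B x (t • y) = σ t * B x y := by
  rw [hB.conj_symm (t • y) x, hB.smul_left, map_mul, mul_left_comm,
    eps_sigma hinv hε hB]

lemma sesq_zero_left (y : V) : B 0 y = 0 := by
  have := hB.smul_left 0 0 y
  simpa using this

lemma sesq_zero_right (x : V) : B x 0 = 0 := by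
  rw [hB.conj_symm 0 x, sesq_zero_left hinv hε hB, map_zero, mul_zero]

lemma sesq_neg_left (x y : V) : B (-x) y = -B x y := by
  have h := hB.add_left x (-x) y
  rw [add_neg_cancel, sesq_zero_left hinv hε hB] at h
  linear_combination -h

lemma sesq_neg_right (x y : V) : B x (-y) = -B x y := by
  rw [hB.conj_symm (-y) x, sesq_neg_left hinv hε hB, map_neg, mul_neg,
    eps_sigma hinv hε hB]

lemma sesq_sub_left (x y z : V) : B (x - y) z = B x z - B y z := by
  rw [sub_eq_add_neg, hB.add_left, sesq_neg_left hinv hε hB, sub_eq_add_neg]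

lemma sesq_sub_right (x y z : V) : B x (y - z) = B x y - B x z := by
  rw [sub_eq_add_neg, sesq_add_right hinv hε hB, sesq_neg_right hinv hε hB,
    sub_eq_add_neg]

end Sesq

section U

/-- difference of the two coordinates -/
def dD (E V : Type*) [Field E] [AddCommGroup V] [Module E V] :
    (V × V) →ₗ[E] V := LinearMap.fst E V V - LinearMap.snd E V V

@[simp] lemma dD_apply (p : V × V) : dD E V p = p.1 - p.2 := rfl

/-- The unipotent map attached to `A`. -/
def uMap (A : V →ₗ[E] V) : (V × V) →ₗ[E] (V × V) :=
  LinearMap.id + LinearMap.prod (A ∘ₗ dD E V) (A ∘ₗ dD E V)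

lemma uMap_apply (A : V →ₗ[E] V) (p : V × V) :
    uMap A p = (p.1 + A (p.1 - p.2), p.2 + A (p.1 - p.2)) := by
  simp [uMap, Prod.ext_iff]

lemma uMap_comp (A A' : V →ₗ[E] V) : uMap A ∘ₗ uMap A' = uMap (A + A') := by
  apply LinearMap.ext
  intro p
  simp only [LinearMap.comp_apply, uMap_apply, LinearMap.add_apply]
  have hd : (p.1 + A' (p.1 - p.2)) - (p.2 + A' (p.1 - p.2)) = p.1 - p.2 := by abel
  rw [hd]
  refine Prod.ext ?_ ?_ <;> simp <;> abel

lemma uMap_zero : uMap (0 : V →ₗ[E] V) = LinearMap.id := by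
  apply LinearMap.ext
  intro p
  simp [uMap_apply]

/-- The unipotent automorphism attached to `A`. -/
def uEquiv (A : V →ₗ[E] V) : (V × V) ≃ₗ[E] (V × V) :=
  LinearEquiv.ofLinear (uMap A) (uMap (-A))
    (by rw [uMap_comp, add_neg_cancel, uMap_zero])
    (by rw [uMap_comp, neg_add_cancel, uMap_zero])

lemma uEquiv_apply (A : V →ₗ[E] V) (p : V × V) :
    uEquiv A p = (p.1 + A (p.1 - p.2), p.2 + A (p.1 - p.2)) := uMap_apply A p

lemma uEquiv_mem (hinv : ∀ x : E, σ (σ x) = x) (hε : ε = 1 ∨ ε = -1)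
    (hB : IsSesq σ ε B) {A : V →ₗ[E] V}
    (hA : ∀ s t : V, B (A s) t + B s (A t) = 0) :
    uEquiv A ∈ IsomGrp (dblForm B) := by
  rw [Dbl.mem_isom_iff]
  intro p q
  have e1 : ∀ x u y v : V, B (x + u) (y + v) = B x y + B x v + B u y + B u v := by
    intro x u y v
    rw [hB.add_left, sesq_add_right hinv hε hB, sesq_add_right hinv hε hB]
    ring
  show dblForm B (uEquiv A p) (uEquiv A q) = dblForm B p q
  rw [uEquiv_apply, uEquiv_apply]
  show B _ _ - B _ _ = B p.1 q.1 - B p.2 q.2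
  rw [e1, e1]
  have h2 := hA (p.1 - p.2) (q.1 - q.2)
  have h5 : B (A (p.1 - p.2)) (q.1 - q.2) =
      B (A (p.1 - p.2)) q.1 - B (A (p.1 - p.2)) q.2 :=
    sesq_sub_right hinv hε hB _ _ _
  have h6 : B (p.1 - p.2) (A (q.1 - q.2)) =
      B p.1 (A (q.1 - q.2)) - B p.2 (A (q.1 - q.2)) :=
    sesq_sub_left hinv hε hB _ _ _
  linear_combination h2 - h5 - h6

lemma uEquiv_fix_diag (A : V →ₗ[E] V) :
    ∀ v ∈ diagSub E V, uEquiv A v = v := by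
  intro v hv
  have hv' : v.1 = v.2 := hv
  rw [uEquiv_apply, hv']
  simp only [sub_self, map_zero, add_zero]
  exact Prod.ext hv'.symm rfl

lemma uEquiv_sub_diag (A : V →ₗ[E] V) (v : V × V) :
    uEquiv A v - v ∈ diagSub E V := by
  rw [uEquiv_apply]
  show (_ - v).1 = (_ - v).2
  simp

end U

section Stab

/-- If an automorphism of `V × V` maps the diagonal into itself, it stabilizes it. -/
lemma stab_of_diag [FiniteDimensional E V] (e : (V × V) ≃ₗ[E] (V × V))
    (hc : ∀ v : V, e (v, v) ∈ diagSub E V) :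
    ∀ x : V × V, x ∈ diagSub E V ↔ e x ∈ diagSub E V := by
  have hle : (diagSub E V).map (e : (V × V) →ₗ[E] (V × V)) ≤ diagSub E V := by
    rintro _ ⟨y, hy, rfl⟩
    have hy' : y.1 = y.2 := hy
    have hyy : y = (y.1, y.1) := Prod.ext rfl hy'.symm
    rw [hyy]
    exact hc y.1
  have heq : (diagSub E V).map (e : (V × V) →ₗ[E] (V × V)) = diagSub E V :=
    Submodule.eq_of_le_of_finrank_le hle (by rw [LinearEquiv.finrank_map_eq])
  intro x
  constructor
  · intro hx
    exact hle (Submodule.mem_map_of_mem hx)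
  · intro hx
    rw [← heq] at hx
    obtain ⟨y, hy, hyx⟩ := hx
    rwa [← e.injective hyx]

end Stab

section Det

lemma det_dualMap {K M : Type*} [Field K] [AddCommGroup M] [Module K M]
    [FiniteDimensional K M] (f : M →ₗ[K] M) :
    LinearMap.det (f.dualMap) = LinearMap.det f := by
  classical
  set b := Module.finBasis K M
  rw [← LinearMap.det_toMatrix b f, ← LinearMap.det_toMatrix b.dualBasis f.dualMap,
    LinearMap.dualMap_def, LinearMap.toMatrix_transpose, Matrix.det_transpose]

lemma det_one_of_isom (hσ : σ = RingHom.id E)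
    (hinv : ∀ x : E, σ (σ x) = x) (hε : ε = 1 ∨ ε = -1)
    (hB : IsSesq σ ε B) (hnd : Nondeg B) [FiniteDimensional E V]
    {g : V ≃ₗ[E] V} (hg : ∀ x y : V, B (g x) (g y) = B x y)
    (hdet : LinearMap.det (LinearMap.id + (g : V →ₗ[E] V)) ≠ 0) :
    LinearMap.det ((g : V →ₗ[E] V)) = 1 := by
  classical
  -- the bilinear form as a map to the dual
  have hsmulr : ∀ (t : E) (x y : V), B x (t • y) = t * B x y := by
    intro t x y
    rw [sesq_smul_right hinv hε hB, hσ]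
    rfl
  let Bl : V →ₗ[E] Module.Dual E V :=
    LinearMap.mk₂ E B hB.add_left (fun t x y => by rw [hB.smul_left]; rfl)
      (sesq_add_right hinv hε hB) (fun t x y => by rw [hsmulr]; rfl)
  have hBl_apply : ∀ x y : V, Bl x y = B x y := fun _ _ => rfl
  have hker : LinearMap.ker Bl = ⊥ := by
    rw [LinearMap.ker_eq_bot']
    intro m hm
    exact hnd m fun y => by rw [← hBl_apply, hm]; rfl
  have hinj : Function.Injective Bl := LinearMap.ker_eq_bot.mp hker
  have hsurj : Function.Surjective Bl :=
    (LinearMap.injective_iff_surjective_of_finrank_eq_finrank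
      (Subspace.dual_finrank_eq).symm).mp hinj
  let Φ : V ≃ₗ[E] Module.Dual E V := LinearEquiv.ofBijective Bl ⟨hinj, hsurj⟩
  set gL : V →ₗ[E] V := (g : V →ₗ[E] V) with hgL
  set gI : V →ₗ[E] V := (g.symm : V →ₗ[E] V) with hgI
  have hBg : ∀ x y : V, B x (g y) = B (g.symm x) y := by
    intro x y
    have := hg (g.symm x) y
    rwa [g.apply_symm_apply] at this
  have key : ∀ x : V,
      (LinearMap.id + gL).dualMap (Bl x) = Bl ((LinearMap.id + gI : V →ₗ[E] V) x) := by
    intro x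
    apply LinearMap.ext
    intro y
    rw [LinearMap.dualMap_apply]
    show B x (y + g y) = B (x + g.symm x) y
    rw [sesq_add_right hinv hε hB, hB.add_left, hBg]
  have hconj : LinearMap.id + gI =
      (Φ.symm : Module.Dual E V →ₗ[E] V) ∘ₗ
        ((LinearMap.id + gL).dualMap) ∘ₗ (Φ : V →ₗ[E] Module.Dual E V) := by
    apply LinearMap.ext
    intro x
    have hΦx : (Φ : V →ₗ[E] Module.Dual E V) x = Bl x := rfl
    simp only [LinearMap.comp_apply, hΦx, key x]
    exact (Φ.symm_apply_apply _).symm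
  have hdet1 : LinearMap.det (LinearMap.id + gI) =
      LinearMap.det (LinearMap.id + gL) := by
    rw [hconj]
    have := LinearMap.det_conj ((LinearMap.id + gL).dualMap) Φ.symm
    rw [LinearEquiv.symm_symm] at this
    rw [this, det_dualMap]
  have hcomp : LinearMap.id + gI = gI ∘ₗ (LinearMap.id + gL) := by
    apply LinearMap.ext
    intro x
    show x + g.symm x = g.symm (x + g x)
    rw [map_add, g.symm_apply_apply]
    abel
  have hdet2 : LinearMap.det gI * LinearMap.det (LinearMap.id + gL) =
      LinearMap.det (LinearMap.id + gL) := by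
    rw [← LinearMap.det_comp, ← hcomp, hdet1]
  have hdetI : LinearMap.det gI = 1 :=
    mul_right_cancel₀ hdet (hdet2.trans (one_mul _).symm)
  have hgg : LinearMap.det gL * LinearMap.det gI = 1 := by
    rw [← LinearMap.det_comp]
    have : gL ∘ₗ gI = LinearMap.id := by
      apply LinearMap.ext
      intro x
      exact g.apply_symm_apply x
    rw [this, LinearMap.det_id]
  rw [hdetI, mul_one] at hgg
  exact hgg

end Det

end DblAux

/-- STATEMENT 11: explicit computation of the doubling zeta operators at the
special section `f₀` for a nondegenerate space, and the resulting formula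
`Γ^{dbl}(π×χ) = ω_π(−1)·χ(−2)^{−d}·j^{dbl}(π,χ)`. -/
theorem statement11
    {E : Type*} [Field E] [Finite E] (σ : E →+* E) (hinv : ∀ x : E, σ (σ x) = x)
    (ε : E) (hε : ε = 1 ∨ ε = -1) (hεE : σ ≠ RingHom.id E → ε = 1)
    (h2 : (2 : E) ≠ 0)
    {V : Type*} [AddCommGroup V] [Module E V] [FiniteDimensional E V]
    (B : V → V → E) (hB : Dbl.IsSesq σ ε B) (hnd : Dbl.Nondeg B)
    (d : ℕ) (hd : d = Module.finrank E V)
    {k : Type*} [Field k] [IsAlgClosed k] (hq : (Nat.card E : k) ≠ 0)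
    (χ : E →* k)
    {Wπ : Type*} [AddCommGroup Wπ] [Module k Wπ] [FiniteDimensional k Wπ]
    (π : Representation k ↥(Dbl.IsomGrp B) Wπ) (hπ : Dbl.RepIrred π)
    -- the central element `-id_V` and the central character value `ω_π(-1)`
    (negg : ↥(Dbl.IsomGrp B)) (hnegg : ∀ v : V, (negg : V ≃ₗ[E] V) v = -v)
    (ω : k) (hω : π negg = ω • (LinearMap.id : Wπ →ₗ[k] Wπ))
    -- the fixed square root of `|𝔤_V|`
    (r : k) (hr : r * r =
      (Nat.card {A : V →ₗ[E] V | ∀ x y : V, B (A x) y + B x (A y) = 0} : k))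
    -- the Weyl element `w = i(id_V, -id_V)`
    (wey : ↥(Dbl.IsomGrp (Dbl.dblForm B)))
    (hwey : ∀ v : V × V, (wey : (V × V) ≃ₗ[E] (V × V)) v = (v.1, -v.2))
    -- the special section `f₀ ∈ I^V(χ)`
    (f0 : ↥(Dbl.IsomGrp (Dbl.dblForm B)) → k)
    (hf0 : f0 = fun g : ↥(Dbl.IsomGrp (Dbl.dblForm B)) =>
      if h : (∀ x : V × V, x ∈ Dbl.diagSub E V ↔
          (g : (V × V) ≃ₗ[E] (V × V)) x ∈ Dbl.diagSub E V)
      then χ (Dbl.detRes (Dbl.diagSub E V) (g : (V × V) ≃ₗ[E] (V × V)) h) else 0)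
    -- the unipotent radical `N^Δ` of the Siegel parabolic
    (NΔ : Set ↥(Dbl.IsomGrp (Dbl.dblForm B)))
    (hNΔ : NΔ = {u : ↥(Dbl.IsomGrp (Dbl.dblForm B)) | (∀ v ∈ Dbl.diagSub E V, (u : (V × V) ≃ₗ[E] (V × V)) v = v) ∧
      (∀ v : V × V, (u : (V × V) ≃ₗ[E] (V × V)) v - v ∈ Dbl.diagSub E V)})
    -- the intertwining operator applied to `f₀`
    (Mf0 : ↥(Dbl.IsomGrp (Dbl.dblForm B)) → k)
    (hMf0 : Mf0 = fun g => r⁻¹ * ∑ᶠ u ∈ NΔ, f0 (wey * u * g))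
    -- the non-abelian Jacobi sum operator and its scalar
    (Jop : Wπ →ₗ[k] Wπ)
    (hJop : Jop = r⁻¹ • ∑ᶠ g : ↥(Dbl.IsomGrp B),
      (if (σ = RingHom.id E → Dbl.detE (g : V ≃ₗ[E] V) = 1) ∧
          LinearMap.det (LinearMap.id + ((g : V ≃ₗ[E] V) : V →ₗ[E] V)) ≠ 0
       then χ (LinearMap.det (LinearMap.id + ((g : V ≃ₗ[E] V) : V →ₗ[E] V)))
       else 0) • π g)
    (j : k) (hj : Jop = j • (LinearMap.id : Wπ →ₗ[k] Wπ)) :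
    (∑ᶠ g : ↥(Dbl.IsomGrp B), f0 (Dbl.iHom B (g, 1)) • π g) =
      (LinearMap.id : Wπ →ₗ[k] Wπ) ∧
    (∑ᶠ g : ↥(Dbl.IsomGrp B), Mf0 (Dbl.iHom B (g, 1)) • π g) =
      (ω * (χ (-2))⁻¹ ^ d * j) • (LinearMap.id : Wπ →ₗ[k] Wπ) ∧
    (∀ Γ : k, (∑ᶠ g : ↥(Dbl.IsomGrp B), Mf0 (Dbl.iHom B (g, 1)) • π g) =
        Γ • (LinearMap.id : Wπ →ₗ[k] Wπ) →
      Γ = ω * (χ (-2))⁻¹ ^ d * j) := by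
  classical
  haveI : Finite V := Module.finite_of_finite E
  haveI : Finite (V ≃ₗ[E] V) :=
    Finite.of_injective (fun e => (e : V → V)) DFunLike.coe_injective
  haveI : Finite ((V × V) ≃ₗ[E] (V × V)) :=
    Finite.of_injective (fun e => (e : V × V → V × V)) DFunLike.coe_injective
  haveI : Fintype ↥(Dbl.IsomGrp B) := Fintype.ofFinite _
  haveI : Fintype ↥(Dbl.IsomGrp (Dbl.dblForm B)) := Fintype.ofFinite _
  -- application lemmas
  have hi_apply : ∀ (g : ↥(Dbl.IsomGrp B)) (x : V × V),
      ((Dbl.iHom B (g, 1) : ↥(Dbl.IsomGrp (Dbl.dblForm B))) :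
        (V × V) ≃ₗ[E] (V × V)) x = ((g : V ≃ₗ[E] V) x.1, x.2) := fun g x => rfl
  have hmul_apply : ∀ (a b : ↥(Dbl.IsomGrp (Dbl.dblForm B))) (x : V × V),
      ((a * b : ↥(Dbl.IsomGrp (Dbl.dblForm B))) : (V × V) ≃ₗ[E] (V × V)) x
        = (a : (V × V) ≃ₗ[E] (V × V)) ((b : (V × V) ≃ₗ[E] (V × V)) x) :=
    fun a b x => rfl
  have hgL_isom : ∀ (g : ↥(Dbl.IsomGrp B)) (x y : V),
      B ((g : V ≃ₗ[E] V) x) ((g : V ≃ₗ[E] V) y) = B x y := fun g => g.2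
  -- the diagonal as a copy of V
  let dE : V ≃ₗ[E] ↥(Dbl.diagSub E V) :=
    { toFun := fun v => ⟨(v, v), rfl⟩
      invFun := fun u => (u : V × V).1
      map_add' := fun a b => Subtype.ext rfl
      map_smul' := fun c a => Subtype.ext rfl
      left_inv := fun v => rfl
      right_inv := fun u => Subtype.ext (Prod.ext rfl u.2) }
  ----------------------------------------------------------------
  -- PART 1
  ----------------------------------------------------------------
  have part1 : (∑ᶠ g : ↥(Dbl.IsomGrp B), f0 (Dbl.iHom B (g, 1)) • π g) =
      (LinearMap.id : Wπ →ₗ[k] Wπ) := by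
    have hzero : ∀ g : ↥(Dbl.IsomGrp B), g ≠ 1 →
        f0 (Dbl.iHom B (g, 1)) • π g = 0 := by
      intro g hg
      have hf : f0 (Dbl.iHom B (g, 1)) = 0 := by
        simp only [hf0]
        rw [dif_neg]
        intro hp
        apply hg
        apply Subtype.ext
        apply LinearEquiv.ext
        intro v
        have h1 := (hp (v, v)).mp rfl
        rw [hi_apply] at h1
        exact h1
      rw [hf, zero_smul]
    rw [finsum_eq_single _ 1 hzero]
    have hcondone : ∀ x : V × V, x ∈ Dbl.diagSub E V ↔
        ((Dbl.iHom B ((1 : ↥(Dbl.IsomGrp B)), (1 : ↥(Dbl.IsomGrp B)))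
          : ↥(Dbl.IsomGrp (Dbl.dblForm B))) : (V × V) ≃ₗ[E] (V × V)) x ∈
            Dbl.diagSub E V := fun x => Iff.rfl
    have hf1 : f0 (Dbl.iHom B (1, 1)) = 1 := by
      simp only [hf0]
      rw [dif_pos hcondone]
      have hres : ((Dbl.resEquiv (Dbl.diagSub E V) _ hcondone :
          ↥(Dbl.diagSub E V) ≃ₗ[E] ↥(Dbl.diagSub E V)) :
          ↥(Dbl.diagSub E V) →ₗ[E] ↥(Dbl.diagSub E V)) = LinearMap.id := by
        apply LinearMap.ext
        intro u
        apply Subtype.ext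
        rfl
      unfold Dbl.detRes
      rw [hres, LinearMap.det_id, map_one]
    rw [hf1, map_one, one_smul]
    rfl
  refine ⟨part1, ?_⟩
  ----------------------------------------------------------------
  -- PART 2 : the main computation
  ----------------------------------------------------------------
  -- scalar facts
  have h2E : ((2 : E))⁻¹ * 2 = 1 := inv_mul_cancel₀ h2
  have hσ2 : σ ((2 : E)⁻¹) = (2 : E)⁻¹ := by
    rw [map_inv₀, map_ofNat]
  -- the inner sum over N^Δ, for each g
  have main : ∀ g : ↥(Dbl.IsomGrp B),
      (∑ᶠ u ∈ NΔ, f0 (wey * u * Dbl.iHom B (g, 1))) =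
        (if LinearMap.det (((g : V ≃ₗ[E] V) : V →ₗ[E] V) - LinearMap.id) = 0
         then 0
         else χ ((2 : E)⁻¹ ^ d *
            LinearMap.det (((g : V ≃ₗ[E] V) : V →ₗ[E] V) - LinearMap.id))) := by
    intro g
    set gE : V ≃ₗ[E] V := (g : V ≃ₗ[E] V) with hgE
    set gL : V →ₗ[E] V := (gE : V →ₗ[E] V) with hgLdef
    set T : V →ₗ[E] V := gL - LinearMap.id with hTdef
    have hTv : ∀ v : V, T v = gE v - v := fun v => rfl
    by_cases hdet : LinearMap.det T = 0
    · rw [if_pos hdet]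
      have hker := LinearMap.bot_lt_ker_of_det_eq_zero hdet
      obtain ⟨v₀, hv₀ker, hv₀nbot⟩ := SetLike.exists_of_lt hker
      have hv₀ne : v₀ ≠ 0 := by simpa using hv₀nbot
      have hgv₀ : gE v₀ = v₀ := by
        have h := LinearMap.mem_ker.mp hv₀ker
        rw [hTv] at h
        exact sub_eq_zero.mp h
      apply finsum_mem_of_eqOn_zero
      intro u hu
      rw [hNΔ] at hu
      obtain ⟨hufix, husub⟩ := hu
      show f0 (wey * u * Dbl.iHom B (g, 1)) = 0
      simp only [hf0]
      rw [dif_neg]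
      intro hp
      have h1 := (hp (v₀, v₀)).mp rfl
      rw [hmul_apply, hmul_apply, hi_apply] at h1
      simp only [← hgE] at h1
      rw [hgv₀, hufix (v₀, v₀) rfl, hwey] at h1
      have h2' : v₀ = -v₀ := h1
      have h3 : (2 : E) • v₀ = 0 := by
        rw [two_smul]
        nth_rewrite 2 [h2']
        exact add_neg_cancel v₀
      rcases smul_eq_zero.mp h3 with h | h
      · exact h2 h
      · exact hv₀ne h
    · rw [if_neg hdet]
      -- the inverse of T
      set tE : V ≃ₗ[E] V := LinearMap.equivOfDetNeZero T hdet with htEdef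
      have htE : ∀ v, tE v = T v := fun v => rfl
      have htEsymm : ∀ v : V, tE.symm (T v) = v := fun v => by
        rw [← htE]; exact tE.symm_apply_apply v
      have htEapp : ∀ v : V, T (tE.symm v) = v := fun v => by
        rw [← htE (tE.symm v)]; exact tE.apply_symm_apply v
      -- the Cayley-type element A
      set A : V →ₗ[E] V :=
        -((2 : E)⁻¹ • ((LinearMap.id + gL) ∘ₗ (tE.symm : V →ₗ[E] V))) with hAdef
      have hAT : ∀ v : V, A (T v) = -((2 : E)⁻¹ • (v + gE v)) := by
        intro v
        rw [hAdef]
        simp only [LinearMap.neg_apply, LinearMap.smul_apply, LinearMap.comp_apply,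
          LinearEquiv.coe_coe, htEsymm, LinearMap.add_apply, LinearMap.id_apply]
        rfl
      have hA : ∀ s t : V, B (A s) t + B s (A t) = 0 := by
        intro s t
        obtain ⟨a, rfl⟩ : ∃ a, T a = s := ⟨tE.symm s, htEapp s⟩
        obtain ⟨b, rfl⟩ : ∃ b, T b = t := ⟨tE.symm t, htEapp t⟩
        rw [hAT, hAT, hTv a, hTv b]
        rw [DblAux.sesq_neg_left hinv hε hB, DblAux.sesq_neg_right hinv hε hB,
          hB.smul_left, DblAux.sesq_smul_right hinv hε hB, hσ2]
        have e₁ : B (a + gE a) (gE b - b)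
            = B a (gE b) - B a b + B (gE a) (gE b) - B (gE a) b := by
          rw [hB.add_left, DblAux.sesq_sub_right hinv hε hB,
            DblAux.sesq_sub_right hinv hε hB]
          ring
        have e₂ : B (gE a - a) (b + gE b)
            = B (gE a) b + B (gE a) (gE b) - B a b - B a (gE b) := by
          rw [DblAux.sesq_sub_left hinv hε hB, DblAux.sesq_add_right hinv hε hB,
            DblAux.sesq_add_right hinv hε hB]
          ring
        have e₃ : B (gE a) (gE b) = B a b := hgL_isom g a b
        linear_combination (-(2 : E)⁻¹) * e₁ + (-(2 : E)⁻¹) * e₂ - (2 * (2 : E)⁻¹) * e₃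
      -- the distinguished unipotent element u₀
      set u₀ : ↥(Dbl.IsomGrp (Dbl.dblForm B)) :=
        ⟨DblAux.uEquiv A, DblAux.uEquiv_mem hinv hε hB hA⟩ with hu₀def
      have hu₀mem : u₀ ∈ NΔ := by
        rw [hNΔ]
        exact ⟨DblAux.uEquiv_fix_diag A, DblAux.uEquiv_sub_diag A⟩
      -- the key diagonal computation
      have hcomp : ∀ v : V,
          ((wey * u₀ * Dbl.iHom B (g, 1) : ↥(Dbl.IsomGrp (Dbl.dblForm B))) :
            (V × V) ≃ₗ[E] (V × V)) (v, v)
            = ((2 : E)⁻¹ • T v, (2 : E)⁻¹ • T v) := by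
        intro v
        rw [hmul_apply, hmul_apply, hi_apply]
        show (wey : (V × V) ≃ₗ[E] (V × V)) (DblAux.uEquiv A (gE v, v)) = _
        rw [DblAux.uEquiv_apply]
        have harg : gE v - v = T v := (hTv v).symm
        rw [harg, hAT, hwey]
        refine Prod.ext ?_ ?_
        · show gE v + -((2 : E)⁻¹ • (v + gE v)) = (2 : E)⁻¹ • T v
          rw [hTv]
          match_scalars <;> (try field_simp) <;> (try norm_num) <;> try ring
        · show -(v + -((2 : E)⁻¹ • (v + gE v))) = (2 : E)⁻¹ • T v
          rw [hTv]
          match_scalars <;> (try field_simp) <;> (try norm_num) <;> try ring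
      have hcond : ∀ v : V,
          ((wey * u₀ * Dbl.iHom B (g, 1) : ↥(Dbl.IsomGrp (Dbl.dblForm B))) :
            (V × V) ≃ₗ[E] (V × V)) (v, v) ∈ Dbl.diagSub E V := by
        intro v
        rw [hcomp v]
        rfl
      have hp := DblAux.stab_of_diag
        ((wey * u₀ * Dbl.iHom B (g, 1) : ↥(Dbl.IsomGrp (Dbl.dblForm B))) :
          (V × V) ≃ₗ[E] (V × V)) hcond
      -- the value at u₀
      have hval : f0 (wey * u₀ * Dbl.iHom B (g, 1))
          = χ ((2 : E)⁻¹ ^ d * LinearMap.det T) := by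
        simp only [hf0]
        rw [dif_pos hp]
        congr 1
        have hres : ((Dbl.resEquiv (Dbl.diagSub E V)
            ((wey * u₀ * Dbl.iHom B (g, 1) : ↥(Dbl.IsomGrp (Dbl.dblForm B))) :
              (V × V) ≃ₗ[E] (V × V)) hp :
            ↥(Dbl.diagSub E V) ≃ₗ[E] ↥(Dbl.diagSub E V)) :
            ↥(Dbl.diagSub E V) →ₗ[E] ↥(Dbl.diagSub E V))
            = (dE : V →ₗ[E] ↥(Dbl.diagSub E V)) ∘ₗ ((2 : E)⁻¹ • T) ∘ₗ
              (dE.symm : ↥(Dbl.diagSub E V) →ₗ[E] V) := by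
          apply LinearMap.ext
          intro u
          apply Subtype.ext
          have hu1 : (u : V × V) = (((u : V × V).1, (u : V × V).1) : V × V) :=
            Prod.ext rfl u.2.symm
          show ((wey * u₀ * Dbl.iHom B (g, 1) : ↥(Dbl.IsomGrp (Dbl.dblForm B))) :
            (V × V) ≃ₗ[E] (V × V)) (u : V × V) = _
          rw [hu1, hcomp]
          rfl
        unfold Dbl.detRes
        rw [hres, LinearMap.det_conj ((2 : E)⁻¹ • T) dE, LinearMap.det_smul, hd]
      -- uniqueness of u₀
      have huniq : ∀ u' ∈ NΔ, u' ≠ u₀ →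
          f0 (wey * u' * Dbl.iHom B (g, 1)) = 0 := by
        intro u' hu' hne
        rw [hNΔ] at hu'
        obtain ⟨hfix, hsub⟩ := hu'
        simp only [hf0]
        rw [dif_neg]
        intro hp'
        apply hne
        -- first compute u' on (T v, 0)
        have hw : ∀ v : V, ((u' : (V × V) ≃ₗ[E] (V × V)) (T v, 0) : V × V)
            = ((2 : E)⁻¹ • T v - v, (2 : E)⁻¹ • T v - v - T v) := by
          intro v
          have hcondv := (hp' (v, v)).mp rfl
          rw [hmul_apply, hmul_apply, hi_apply] at hcondv
          set w : V × V := (u' : (V × V) ≃ₗ[E] (V × V)) (T v, 0) with hwdef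
          have hsplit : ((gE v, v) : V × V) = ((v, v) : V × V) + (T v, 0) := by
            refine Prod.ext ?_ ?_
            · show gE v = v + T v
              rw [hTv]; abel
            · show v = v + 0
              rw [add_zero]
          have happ : (u' : (V × V) ≃ₗ[E] (V × V)) ((gE v, v) : V × V)
              = (v + w.1, v + w.2) := by
            rw [hsplit, map_add, hfix (v, v) rfl, ← hwdef]
            exact Prod.ext rfl rfl
          rw [show ((g : V ≃ₗ[E] V) v, v) = ((gE v, v) : V × V) from rfl] at hcondv
          rw [happ, hwey] at hcondv
          have hmemv : v + w.1 = -(v + w.2) := hcondv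
          have hw2 : w.1 - T v = w.2 := by
            have hs := hsub (T v, 0)
            rw [← hwdef] at hs
            have : (w - ((T v, 0) : V × V)).1 = (w - ((T v, 0) : V × V)).2 := hs
            simpa using this
          have hsum : w.1 + w.1 = T v - (v + v) := by
            have := hmemv
            rw [← hw2] at this
            have h' : v + w.1 = -(v + (w.1 - T v)) := this
            have h'' : v + w.1 + (v + (w.1 - T v)) = 0 := by
              rw [h']; abel
            have h3 : w.1 + w.1 + (v + v - T v) = 0 := by
              rw [← h'']; abel
            have h4 := congrArg (fun z => z - (v + v - T v)) h3
            simpa [sub_eq_add_neg, add_assoc, add_comm, add_left_comm] using h4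
          have hw1 : w.1 = (2 : E)⁻¹ • T v - v := by
            have h4 : (2 : E) • w.1 = T v - (v + v) := by rw [two_smul]; exact hsum
            have h5 := congrArg (fun z => (2 : E)⁻¹ • z) h4
            simp only [smul_smul, h2E, one_smul] at h5
            rw [h5]
            match_scalars <;> (try field_simp) <;> (try norm_num) <;> try ring
          refine Prod.ext hw1 ?_
          rw [← hw2, hw1]
        -- now identify u' with u₀
        apply Subtype.ext
        show (u' : (V × V) ≃ₗ[E] (V × V)) = DblAux.uEquiv A
        apply LinearEquiv.ext
        intro x
        have hx : x = (((x.2, x.2) : V × V)) + (T (tE.symm (x.1 - x.2)), 0) := by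
          rw [htEapp]
          refine Prod.ext ?_ ?_
          · show x.1 = x.2 + (x.1 - x.2); abel
          · show x.2 = x.2 + 0; rw [add_zero]
        conv_lhs => rw [hx]
        rw [map_add, hfix (x.2, x.2) rfl, hw, DblAux.uEquiv_apply]
        set v := tE.symm (x.1 - x.2) with hvdef
        have hTvx : T v = x.1 - x.2 := htEapp _
        rw [show x.1 - x.2 = T v from hTvx.symm, hAT]
        refine Prod.ext ?_ ?_
        · show x.2 + ((2 : E)⁻¹ • T v - v) = x.1 + -((2 : E)⁻¹ • (v + gE v))
          have hx1 : x.1 = x.2 + T v := by rw [hTvx]; abel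
          rw [hx1, hTv]
          match_scalars <;> (try field_simp) <;> (try norm_num) <;> try ring
        · show x.2 + ((2 : E)⁻¹ • T v - v - T v) = x.2 + -((2 : E)⁻¹ • (v + gE v))
          rw [hTv]
          match_scalars <;> (try field_simp) <;> (try norm_num) <;> try ring
      -- sum up
      have hNΔfin : NΔ.Finite := Set.toFinite NΔ
      rw [finsum_mem_eq_finite_toFinset_sum _ hNΔfin]
      rw [Finset.sum_eq_single u₀]
      · exact hval
      · intro b hb hbne
        exact huniq b (hNΔfin.mem_toFinset.mp hb) hbne
      · intro habs
        exact absurd (hNΔfin.mem_toFinset.mpr hu₀mem) habs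
  ----------------------------------------------------------------
  -- assembling part 2
  ----------------------------------------------------------------
  have hneg_coe : ∀ x : ↥(Dbl.IsomGrp B),
      (((negg * x : ↥(Dbl.IsomGrp B)) : V ≃ₗ[E] V) : V →ₗ[E] V)
        = -(((x : V ≃ₗ[E] V) : V →ₗ[E] V)) := by
    intro x
    apply LinearMap.ext
    intro v
    show (negg : V ≃ₗ[E] V) ((x : V ≃ₗ[E] V) v) = -(x : V ≃ₗ[E] V) v
    rw [hnegg]
  have hπneg : ∀ x : ↥(Dbl.IsomGrp B), π (negg * x) = ω • π x := by
    intro x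
    rw [map_mul, hω, smul_mul_assoc, ← Module.End.one_eq_id, one_mul]
  have hχinv : χ ((-2 : E)⁻¹) = (χ (-2))⁻¹ := by
    apply eq_inv_of_mul_eq_one_right
    rw [← map_mul]
    have hne : (-2 : E) ≠ 0 := neg_ne_zero.mpr h2
    rw [mul_inv_cancel₀ hne, map_one]
  have hMterm : ∀ x : ↥(Dbl.IsomGrp B),
      Mf0 (Dbl.iHom B (x, 1)) = r⁻¹ *
        (if LinearMap.det (((x : V ≃ₗ[E] V) : V →ₗ[E] V) - LinearMap.id) = 0
         then 0
         else χ ((2 : E)⁻¹ ^ d *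
            LinearMap.det (((x : V ≃ₗ[E] V) : V →ₗ[E] V) - LinearMap.id))) := by
    intro x
    simp only [hMf0]
    rw [main x]
  -- rewrite the Jacobi condition
  have hJcond : ∀ x : ↥(Dbl.IsomGrp B),
      ((σ = RingHom.id E → Dbl.detE (x : V ≃ₗ[E] V) = 1) ∧
        LinearMap.det (LinearMap.id + (((x : V ≃ₗ[E] V)) : V →ₗ[E] V)) ≠ 0) ↔
      LinearMap.det (LinearMap.id + (((x : V ≃ₗ[E] V)) : V →ₗ[E] V)) ≠ 0 := by
    intro x
    constructor
    · exact And.right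
    · intro hQ
      refine ⟨fun hσ => ?_, hQ⟩
      exact DblAux.det_one_of_isom hσ hinv hε hB hnd x.2 hQ
  -- determinant of the negated map
  have hdetneg : ∀ x : ↥(Dbl.IsomGrp B),
      LinearMap.det ((((negg * x : ↥(Dbl.IsomGrp B)) : V ≃ₗ[E] V) : V →ₗ[E] V)
          - LinearMap.id)
        = (-1 : E) ^ d *
          LinearMap.det (LinearMap.id + (((x : V ≃ₗ[E] V)) : V →ₗ[E] V)) := by
    intro x
    rw [hneg_coe]
    have : (-(((x : V ≃ₗ[E] V)) : V →ₗ[E] V)) - LinearMap.id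
        = (-1 : E) • (LinearMap.id + (((x : V ≃ₗ[E] V)) : V →ₗ[E] V)) := by
      rw [neg_one_smul]
      abel
    rw [this, LinearMap.det_smul, hd]
  have hm1 : ((-1 : E) ^ d) ≠ 0 := pow_ne_zero d (neg_ne_zero.mpr one_ne_zero)
  -- the per-term identity after reindexing
  have hterm : ∀ x : ↥(Dbl.IsomGrp B),
      Mf0 (Dbl.iHom B ((negg * x : ↥(Dbl.IsomGrp B)), 1)) • π (negg * x)
        = (ω * (χ (-2))⁻¹ ^ d * r⁻¹) •
          ((if (σ = RingHom.id E → Dbl.detE (x : V ≃ₗ[E] V) = 1) ∧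
              LinearMap.det (LinearMap.id + (((x : V ≃ₗ[E] V)) : V →ₗ[E] V)) ≠ 0
            then χ (LinearMap.det (LinearMap.id + (((x : V ≃ₗ[E] V)) : V →ₗ[E] V)))
            else 0) • π x) := by
    intro x
    rw [hMterm, hπneg, hdetneg]
    set D : E := LinearMap.det (LinearMap.id + (((x : V ≃ₗ[E] V)) : V →ₗ[E] V))
      with hD
    by_cases hQ : D = 0
    · rw [if_pos (by rw [hQ, mul_zero]), if_neg (by
        rw [hJcond x]
        exact fun hh => hh hQ)]
      simp
    · rw [if_neg (by
        intro hcontra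
        rcases mul_eq_zero.mp hcontra with h | h
        · exact hm1 h
        · exact hQ h), if_pos ((hJcond x).mpr hQ)]
      -- scalar computation
      have hEside : (2 : E)⁻¹ ^ d * ((-1 : E) ^ d * D) = ((-2 : E)⁻¹) ^ d * D := by
        rw [← mul_assoc, ← mul_pow]
        congr 2
        rw [inv_neg]
        ring
      rw [hEside, map_mul, map_pow, hχinv]
      rw [smul_smul, smul_smul]
      congr 1
      ring
  have part2 : (∑ᶠ g : ↥(Dbl.IsomGrp B), Mf0 (Dbl.iHom B (g, 1)) • π g) =
      (ω * (χ (-2))⁻¹ ^ d * j) • (LinearMap.id : Wπ →ₗ[k] Wπ) := by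
    rw [finsum_eq_sum_of_fintype]
    have hreindex : (∑ x : ↥(Dbl.IsomGrp B), Mf0 (Dbl.iHom B (x, 1)) • π x)
        = ∑ x : ↥(Dbl.IsomGrp B),
            Mf0 (Dbl.iHom B ((negg * x : ↥(Dbl.IsomGrp B)), 1)) • π (negg * x) :=
      (Fintype.sum_equiv (Equiv.mulLeft negg)
        (fun x => Mf0 (Dbl.iHom B ((negg * x : ↥(Dbl.IsomGrp B)), 1)) • π (negg * x))
        (fun x => Mf0 (Dbl.iHom B (x, 1)) • π x)
        (fun x => rfl)).symm
    rw [hreindex]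
    have : ∀ x : ↥(Dbl.IsomGrp B),
        Mf0 (Dbl.iHom B ((negg * x : ↥(Dbl.IsomGrp B)), 1)) • π (negg * x)
          = (ω * (χ (-2))⁻¹ ^ d * r⁻¹) •
            ((if (σ = RingHom.id E → Dbl.detE (x : V ≃ₗ[E] V) = 1) ∧
                LinearMap.det (LinearMap.id + (((x : V ≃ₗ[E] V)) : V →ₗ[E] V)) ≠ 0
              then χ (LinearMap.det (LinearMap.id +
                (((x : V ≃ₗ[E] V)) : V →ₗ[E] V)))
              else 0) • π x) := hterm
    rw [Finset.sum_congr rfl (fun x _ => this x)]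
    rw [← Finset.smul_sum]
    have hS : Jop = r⁻¹ • ∑ x : ↥(Dbl.IsomGrp B),
        (if (σ = RingHom.id E → Dbl.detE (x : V ≃ₗ[E] V) = 1) ∧
            LinearMap.det (LinearMap.id + (((x : V ≃ₗ[E] V)) : V →ₗ[E] V)) ≠ 0
          then χ (LinearMap.det (LinearMap.id + (((x : V ≃ₗ[E] V)) : V →ₗ[E] V)))
          else 0) • π x := by
      rw [hJop, finsum_eq_sum_of_fintype]
    rw [show ((ω * (χ (-2))⁻¹ ^ d * r⁻¹) : k) = (ω * (χ (-2))⁻¹ ^ d) * r⁻¹ from rfl,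
      ← smul_smul]
    rw [← hS, hj, smul_smul]
  refine ⟨part2, ?_⟩
  ----------------------------------------------------------------
  -- PART 3
  ----------------------------------------------------------------
  intro Γ hΓ
  rw [part2] at hΓ
  haveI : Nontrivial Wπ := hπ.1
  obtain ⟨w₀, hw₀⟩ := exists_ne (0 : Wπ)
  have := congrArg (fun (T : Wπ →ₗ[k] Wπ) => T w₀) hΓ.symm
  simp only [LinearMap.smul_apply, LinearMap.id_apply] at this
  have hsub : (Γ - (ω * (χ (-2))⁻¹ ^ d * j)) • w₀ = 0 := by
    rw [sub_smul, this, sub_self]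
  rcases smul_eq_zero.mp hsub with h | h
  · exact sub_eq_zero.mp h
  · exact absurd h hw₀
end
end

section
/- Let V be a d-dimensional E-vector space with identically zero form (so Isom(V) = GL_E(V)), let χ : Eˣ → kˣ be a character, let (π, W) be an irreducible finite-dimensional representation of GL_E(V) over k, and let ω_π(−1) ∈ kˣ be the scalar by which π(−id_V) acts. Then Z_{V,χ^{-c},π}(M_χ f₀) = ω_π(−1) · χ(4)^{−d} · |End_E(V)|^{-1/2} · Σ over g ∈ GL_E(V) with det_E(id_V + g) ≠ 0 of χ^{1+c}(det_E(id_V + g)) · χ^{-c}(det_E g) · π(g); equivalently, Z_{V,χ^{-c},π}(M_χ f₀) = ω_π(−1) · χ(4)^{−d} · j^{dbl}(π ⊗ (χ^{-c} ∘ det_E), χ^{1+c}) · id_W, where π ⊗ (χ^{-c} ∘ det_E) denotes the twist g ↦ χ^{-c}(det_E g)·π(g). -/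
open scoped TensorProduct

noncomputable section

open scoped BigOperators
open Classical
namespace SDbl

open Dbl

variable {E : Type*} [Field E] {V : Type*} [AddCommGroup V] [Module E V]

theorem mem_diagSub {p : V × V} : p ∈ diagSub E V ↔ p.1 = p.2 := Iff.rfl

theorem lmul_apply (e₁ e₂ : V ≃ₗ[E] V) (x : V) : (e₁ * e₂) x = e₁ (e₂ x) := rfl

/-- `qd (x, y) = x - y`. -/
def qd (E : Type*) [Field E] (V : Type*) [AddCommGroup V] [Module E V] :
    (V × V) →ₗ[E] V := LinearMap.fst E V V - LinearMap.snd E V V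

@[simp] theorem qd_apply (p : V × V) : qd E V p = p.1 - p.2 := rfl

/-- `jd v = (v, v)`. -/
def jd (E : Type*) [Field E] (V : Type*) [AddCommGroup V] [Module E V] :
    V →ₗ[E] V × V := LinearMap.prod LinearMap.id LinearMap.id

@[simp] theorem jd_apply (v : V) : jd E V v = (v, v) := rfl

/-- The unipotent element attached to `X : End V`. -/
def uMap (X : V →ₗ[E] V) : (V × V) →ₗ[E] V × V :=
  LinearMap.id + (jd E V) ∘ₗ X ∘ₗ (qd E V)

theorem uMap_apply (X : V →ₗ[E] V) (p : V × V) :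
    uMap X p = (p.1 + X (p.1 - p.2), p.2 + X (p.1 - p.2)) := rfl

theorem uMap_comp (X Y : V →ₗ[E] V) : uMap X ∘ₗ uMap Y = uMap (X + Y) := by
  apply LinearMap.ext
  intro p
  simp only [LinearMap.comp_apply, uMap_apply, add_sub_add_right_eq_sub, LinearMap.add_apply,
    Prod.mk.injEq]
  constructor <;> abel

theorem uMap_zero : uMap (0 : V →ₗ[E] V) = LinearMap.id := by
  apply LinearMap.ext
  intro p
  simp [uMap_apply]

def uEquiv (X : V →ₗ[E] V) : (V × V) ≃ₗ[E] V × V :=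
  LinearEquiv.ofLinear (uMap X) (uMap (-X))
    (by rw [uMap_comp, add_neg_cancel, uMap_zero])
    (by rw [uMap_comp, neg_add_cancel, uMap_zero])

@[simp] theorem uEquiv_apply (X : V →ₗ[E] V) (p : V × V) :
    uEquiv X p = (p.1 + X (p.1 - p.2), p.2 + X (p.1 - p.2)) := rfl

theorem uEquiv_injective :
    Function.Injective (uEquiv : (V →ₗ[E] V) → ((V × V) ≃ₗ[E] V × V)) := by
  intro X Y h
  apply LinearMap.ext
  intro v
  have h1 : uEquiv X (v, 0) = uEquiv Y (v, 0) := by rw [h]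
  have h2 := congrArg Prod.snd h1
  simpa using h2

theorem NDelta_eq :
    {u : (V × V) ≃ₗ[E] (V × V) |
      (∀ v ∈ diagSub E V, u v = v) ∧ (∀ v : V × V, u v - v ∈ diagSub E V)}
    = Set.range (uEquiv : (V →ₗ[E] V) → ((V × V) ≃ₗ[E] V × V)) := by
  ext u
  constructor
  · rintro ⟨hfix, hdiag⟩
    refine ⟨(LinearMap.fst E V V ∘ₗ
      ((u : (V × V) →ₗ[E] V × V) - LinearMap.id)) ∘ₗ LinearMap.inl E V V, ?_⟩
    symm
    apply LinearEquiv.ext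
    intro p
    set X := (LinearMap.fst E V V ∘ₗ
      ((u : (V × V) →ₗ[E] V × V) - LinearMap.id)) ∘ₗ LinearMap.inl E V V with hX
    have hXval : X (p.1 - p.2) = (u (p.1 - p.2, 0)).1 - (p.1 - p.2) := by
      simp [hX]
    have hfix2 : u (p.2, p.2) = (p.2, p.2) := hfix (p.2, p.2) rfl
    have hsplit : ((p.1 - p.2 : V), (0 : V)) + (p.2, p.2) = p := by
      ext <;> simp
    have hup : u p = u (p.1 - p.2, 0) + (p.2, p.2) := by
      conv_lhs => rw [← hsplit]
      rw [map_add, hfix2]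
    have hsnd : (u (p.1 - p.2, 0)).2 = (u (p.1 - p.2, 0)).1 - (p.1 - p.2) := by
      have h3 := hdiag (p.1 - p.2, 0)
      rw [mem_diagSub] at h3
      have h4 : (u (p.1 - p.2, 0)).1 - (p.1 - p.2) = (u (p.1 - p.2, 0)).2 - 0 := h3
      simpa using h4.symm
    rw [uEquiv_apply, hup, hXval]
    have : (u (p.1 - p.2, 0) + (p.2, p.2)) =
        ((u (p.1 - p.2, 0)).1 + p.2, (u (p.1 - p.2, 0)).2 + p.2) := rfl
    rw [this, hsnd, Prod.mk.injEq]
    constructor <;> abel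
  · rintro ⟨X, rfl⟩
    constructor
    · rintro ⟨a, b⟩ hv
      have hab : a = b := hv
      subst hab
      simp
    · intro p
      rw [mem_diagSub]
      show (uEquiv X p - p).1 = (uEquiv X p - p).2
      rw [uEquiv_apply]
      show p.1 + X (p.1 - p.2) - p.1 = p.2 + X (p.1 - p.2) - p.2
      abel

/-- The diagonal embedding as a linear equivalence `V ≃ diagSub E V`. -/
def diagEquiv (E : Type*) [Field E] (V : Type*) [AddCommGroup V] [Module E V] :
    V ≃ₗ[E] ↥(diagSub E V) where
  toFun v := ⟨(v, v), rfl⟩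
  map_add' a b := by apply Subtype.ext; rfl
  map_smul' c a := by apply Subtype.ext; rfl
  invFun p := (p : V × V).1
  left_inv v := rfl
  right_inv p := by
    apply Subtype.ext
    exact Prod.ext_iff.mpr ⟨rfl, p.2⟩

@[simp] theorem diagEquiv_apply (v : V) : (diagEquiv E V v : V × V) = (v, v) := rfl

@[simp] theorem diagEquiv_symm_apply (p : ↥(diagSub E V)) :
    (diagEquiv E V).symm p = (p : V × V).1 := rfl

theorem diag_le_ker_qd : diagSub E V ≤ LinearMap.ker (qd E V) := by
  intro p hp
  have h1 : p.1 = p.2 := hp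
  simp [LinearMap.mem_ker, h1]

/-- The quotient of the doubling space by the diagonal, identified with `V`. -/
def quotEquiv (E : Type*) [Field E] (V : Type*) [AddCommGroup V] [Module E V] :
    ((V × V) ⧸ diagSub E V) ≃ₗ[E] V :=
  LinearEquiv.ofLinear (Submodule.liftQ _ (qd E V) diag_le_ker_qd)
    ((diagSub E V).mkQ ∘ₗ LinearMap.inl E V V)
    (by
      apply LinearMap.ext
      intro v
      simp)
    (by
      apply Submodule.linearMap_qext
      apply LinearMap.ext
      intro p
      simp only [LinearMap.comp_apply, Submodule.mkQ_apply, Submodule.liftQ_apply, qd_apply,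
        LinearMap.inl_apply, LinearMap.id_coe, id_eq]
      rw [Submodule.Quotient.eq]
      show ((p.1 - p.2, 0) - p : V × V).1 = ((p.1 - p.2, 0) - p : V × V).2
      show p.1 - p.2 - p.1 = 0 - p.2
      abel)

@[simp] theorem quotEquiv_mk (p : V × V) :
    quotEquiv E V (Submodule.Quotient.mk p) = p.1 - p.2 := by
  simp [quotEquiv]

section Cnd

/-- Solvability condition. -/
def Cnd (γ : V ≃ₗ[E] V) (X : V →ₗ[E] V) : Prop :=
  ∀ v : V, γ v + v + (2 : E) • X (γ v - v) = 0

theorem cnd_of_stab {γ : V ≃ₗ[E] V} {X : V →ₗ[E] V} {h : (V × V) ≃ₗ[E] V × V}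
    (hh : ∀ p : V × V, h p = (γ p.1 + X (γ p.1 - p.2), -(p.2 + X (γ p.1 - p.2))))
    (hs : ∀ p : V × V, p ∈ diagSub E V ↔ h p ∈ diagSub E V) : Cnd γ X := by
  intro v
  have h1 : (h (v, v)).1 = (h (v, v)).2 := (hs (v, v)).1 rfl
  rw [hh] at h1
  have h2 : (γ v + X (γ v - v)) + (v + X (γ v - v)) = 0 := by
    show γ v + X (γ v - v) + (v + X (γ v - v)) = 0
    rw [show (γ v + X (γ v - v) : V) = -(v + X (γ v - v)) from h1]
    abel
  rw [two_smul]
  calc γ v + v + (X (γ v - v) + X (γ v - v))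
      = (γ v + X (γ v - v)) + (v + X (γ v - v)) := by abel
    _ = 0 := h2

variable [FiniteDimensional E V]

theorem stab_of_cnd (h2 : (2 : E) ≠ 0) {γ : V ≃ₗ[E] V} {X : V →ₗ[E] V}
    {h : (V × V) ≃ₗ[E] V × V}
    (hh : ∀ p : V × V, h p = (γ p.1 + X (γ p.1 - p.2), -(p.2 + X (γ p.1 - p.2))))
    (hC : Cnd γ X) : ∀ p : V × V, p ∈ diagSub E V ↔ h p ∈ diagSub E V := by
  have hker : ∀ w : V, γ w - w = 0 → w = 0 := by
    intro w hw
    have h1 := hC w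
    rw [hw, map_zero, smul_zero, add_zero] at h1
    have h2' : γ w = w := by rwa [sub_eq_zero] at hw
    rw [h2'] at h1
    have h3 : (2 : E) • w = 0 := by rw [two_smul]; exact h1
    rcases smul_eq_zero.mp h3 with h | h
    · exact absurd h h2
    · exact h
  have hinj : Function.Injective (((γ : V →ₗ[E] V) - LinearMap.id : V →ₗ[E] V)) := by
    rw [← LinearMap.ker_eq_bot, LinearMap.ker_eq_bot']
    intro m hm
    apply hker
    simpa using hm
  have hsurj := LinearMap.injective_iff_surjective.mp hinj
  intro p
  constructor
  · intro hp
    have hp' : p.1 = p.2 := hp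
    rw [mem_diagSub, hh]
    show γ p.1 + X (γ p.1 - p.2) = -(p.2 + X (γ p.1 - p.2))
    rw [← hp']
    have h1 := hC p.1
    rw [two_smul] at h1
    have h2'' : (γ p.1 + X (γ p.1 - p.1)) + (p.1 + X (γ p.1 - p.1)) = 0 := by
      calc (γ p.1 + X (γ p.1 - p.1)) + (p.1 + X (γ p.1 - p.1))
          = γ p.1 + p.1 + (X (γ p.1 - p.1) + X (γ p.1 - p.1)) := by abel
        _ = 0 := h1
    exact eq_neg_of_add_eq_zero_left h2''
  · intro hp
    rw [mem_diagSub, hh] at hp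
    have hp' : γ p.1 + X (γ p.1 - p.2) = -(p.2 + X (γ p.1 - p.2)) := hp
    rw [mem_diagSub]
    have h1 : γ p.1 + p.2 + (2 : E) • X (γ p.1 - p.2) = 0 := by
      rw [two_smul]
      calc γ p.1 + p.2 + (X (γ p.1 - p.2) + X (γ p.1 - p.2))
          = (γ p.1 + X (γ p.1 - p.2)) + (p.2 + X (γ p.1 - p.2)) := by abel
        _ = 0 := by rw [hp']; abel
    have e1 : (2 : E) • X (γ p.1 - p.2) = -(γ p.1 + p.2) := eq_neg_of_add_eq_zero_right h1
    have e2 : (2 : E) • X (γ p.1 - p.1) = -(γ p.1 + p.1) := eq_neg_of_add_eq_zero_right (hC p.1)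
    have hXsplit : X (p.1 - p.2) = X (γ p.1 - p.2) - X (γ p.1 - p.1) := by
      rw [← map_sub]
      congr 1
      abel
    have hw : (2 : E) • X (p.1 - p.2) = p.1 - p.2 := by
      rw [hXsplit, smul_sub, e1, e2]
      abel
    obtain ⟨v, hv⟩ := hsurj (p.1 - p.2)
    have hv' : γ v - v = p.1 - p.2 := by simpa using hv
    have h4 := hC v
    rw [hv', hw] at h4
    have h5 : (2 : E) • γ v = 0 := by
      rw [two_smul]
      calc γ v + γ v = (γ v + v + (p.1 - p.2)) + ((γ v - v) - (p.1 - p.2)) := by abel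
        _ = 0 := by rw [h4, hv']; abel
    have h6 : γ v = 0 := by
      rcases smul_eq_zero.mp h5 with h | h
      · exact absurd h h2
      · exact h
    have h7 : v = 0 := by
      have h8 := congrArg γ.symm h6
      simpa using h8
    have h9 : p.1 - p.2 = 0 := by rw [← hv', h7]; simp
    exact sub_eq_zero.mp h9

theorem cnd_none {γ : V ≃ₗ[E] V} (h2 : (2 : E) ≠ 0)
    (hdet : LinearMap.det ((γ : V →ₗ[E] V) - LinearMap.id) = 0) (X : V →ₗ[E] V) :
    ¬ Cnd γ X := by
  intro hC
  obtain ⟨v, hv0, hfv⟩ :=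
    ((LinearMap.hasEigenvalue_zero_tfae ((γ : V →ₗ[E] V) - LinearMap.id)).out 3 5).mp hdet
  have hγ : γ v = v := by
    have h1 : γ v - v = 0 := by simpa using hfv
    rwa [sub_eq_zero] at h1
  have h1 := hC v
  rw [hγ, sub_self, map_zero, smul_zero, add_zero] at h1
  have h3 : (2 : E) • v = 0 := by rw [two_smul]; exact h1
  rcases smul_eq_zero.mp h3 with h | h
  · exact absurd h h2
  · exact hv0 h

theorem cnd_unique (h2 : (2 : E) ≠ 0) (γ : V ≃ₗ[E] V)
    (hdet : LinearMap.det ((γ : V →ₗ[E] V) - LinearMap.id) ≠ 0) :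
    ∃ X₀ : V →ₗ[E] V, ∀ X, Cnd γ X ↔ X = X₀ := by
  set f : V →ₗ[E] V := (γ : V →ₗ[E] V) - LinearMap.id with hf
  have hker : LinearMap.ker f = ⊥ :=
    ((LinearMap.not_hasEigenvalue_zero_tfae f).out 3 4).mp hdet
  have hu : IsUnit f := (LinearMap.isUnit_iff_ker_eq_bot f).mpr hker
  obtain ⟨u, hufeq⟩ := hu
  refine ⟨(2 : E)⁻¹ • ((-((γ : V →ₗ[E] V) + LinearMap.id)) *
    ((u⁻¹ : (V →ₗ[E] V)ˣ) : V →ₗ[E] V)), ?_⟩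
  intro X
  have hiff : Cnd γ X ↔ (2 : E) • (X * f) = -((γ : V →ₗ[E] V) + LinearMap.id) := by
    constructor
    · intro hC
      apply LinearMap.ext
      intro v
      have h1 := eq_neg_of_add_eq_zero_right (hC v)
      simp only [LinearMap.smul_apply, Module.End.mul_apply, LinearMap.neg_apply,
        LinearMap.add_apply, LinearMap.id_coe, id_eq, hf, LinearMap.sub_apply,
        LinearEquiv.coe_coe]
      exact h1
    · intro hE
      intro v
      have h1 := LinearMap.congr_fun hE v
      simp only [LinearMap.smul_apply, Module.End.mul_apply, LinearMap.neg_apply,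
        LinearMap.add_apply, LinearMap.id_coe, id_eq, hf, LinearMap.sub_apply,
        LinearEquiv.coe_coe] at h1
      rw [show (2 : E) • X (γ v - v) = -(γ v + v) from h1]
      abel
  rw [hiff]
  constructor
  · intro hE
    have h1 : ((2 : E) • X) * (↑u : V →ₗ[E] V) = -((γ : V →ₗ[E] V) + LinearMap.id) := by
      rw [hufeq, smul_mul_assoc]
      exact hE
    have h2' : (2 : E) • X =
        -((γ : V →ₗ[E] V) + LinearMap.id) * ((u⁻¹ : (V →ₗ[E] V)ˣ) : V →ₗ[E] V) := by
      rw [← h1, Units.mul_inv_cancel_right]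
    rw [← h2', smul_smul, inv_mul_cancel₀ h2, one_smul]
  · rintro rfl
    rw [smul_mul_assoc, smul_smul, mul_inv_cancel₀ h2, one_smul]
    rw [← hufeq, Units.inv_mul_cancel_right]

end Cnd


theorem resEquiv_apply_coe {W : Type*} [AddCommGroup W] [Module E W] (U : Submodule E W)
    (e : W ≃ₗ[E] W) (he : ∀ x : W, x ∈ U ↔ e x ∈ U) (x : ↥U) :
    ((resEquiv U e he x : ↥U) : W) = e (x : W) := rfl

theorem res_value (h2 : (2 : E) ≠ 0) [FiniteDimensional E V] {γ : V ≃ₗ[E] V} {X : V →ₗ[E] V}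
    {h : (V × V) ≃ₗ[E] V × V}
    (hh : ∀ p : V × V, h p = (γ p.1 + X (γ p.1 - p.2), -(p.2 + X (γ p.1 - p.2))))
    (hC : Cnd γ X)
    (hp : ∀ x : V × V, x ∈ diagSub E V ↔ h x ∈ diagSub E V) :
    detRes (diagSub E V) h hp =
      (2 : E)⁻¹ ^ Module.finrank E V *
        LinearMap.det ((γ : V →ₗ[E] V) - LinearMap.id) := by
  have key0 : ∀ a : V, h (a, a) = ((2 : E)⁻¹ • (γ a - a), (2 : E)⁻¹ • (γ a - a)) := by
    intro a
    rw [hh]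
    have e2 : (2 : E) • X (γ a - a) = -(γ a + a) := eq_neg_of_add_eq_zero_right (hC a)
    have hXa : X (γ a - a) = (2 : E)⁻¹ • (-(γ a + a)) := by
      rw [← e2, smul_smul, inv_mul_cancel₀ h2, one_smul]
    rw [hXa]
    have c1 : γ a + (2 : E)⁻¹ • -(γ a + a) = (2 : E)⁻¹ • (γ a - a) := by
      apply smul_right_injective V h2
      show (2 : E) • (γ a + (2 : E)⁻¹ • -(γ a + a)) = (2 : E) • ((2 : E)⁻¹ • (γ a - a))
      rw [smul_add, smul_smul, mul_inv_cancel₀ h2, one_smul, smul_smul,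
        mul_inv_cancel₀ h2, one_smul, two_smul]
      abel
    have c2 : -(a + (2 : E)⁻¹ • -(γ a + a)) = (2 : E)⁻¹ • (γ a - a) := by
      apply smul_right_injective V h2
      show (2 : E) • (-(a + (2 : E)⁻¹ • -(γ a + a))) = (2 : E) • ((2 : E)⁻¹ • (γ a - a))
      rw [smul_neg, smul_add, smul_smul, mul_inv_cancel₀ h2, one_smul, smul_smul,
        mul_inv_cancel₀ h2, one_smul, two_smul]
      abel
    rw [c1, c2]
  have key : (↑(resEquiv (diagSub E V) h hp) : ↥(diagSub E V) →ₗ[E] ↥(diagSub E V)) =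
      (↑(diagEquiv E V) : V →ₗ[E] ↥(diagSub E V)) ∘ₗ
        ((2 : E)⁻¹ • ((γ : V →ₗ[E] V) - LinearMap.id)) ∘ₗ
        (↑(diagEquiv E V).symm : ↥(diagSub E V) →ₗ[E] V) := by
    apply LinearMap.ext
    intro q
    apply Subtype.ext
    have hmem : (q : V × V).1 = (q : V × V).2 := q.2
    have hq : (q : V × V) = ((q : V × V).1, (q : V × V).1) := Prod.ext_iff.mpr ⟨rfl, hmem.symm⟩
    simp only [LinearMap.coe_comp, Function.comp_apply, LinearEquiv.coe_coe,
      diagEquiv_symm_apply, LinearMap.smul_apply, LinearMap.sub_apply, LinearMap.id_coe, id_eq,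
      diagEquiv_apply, resEquiv_apply_coe]
    conv_lhs => rw [hq]
    rw [key0]
  unfold Dbl.detRes
  rw [key]
  rw [LinearMap.det_conj ((2 : E)⁻¹ • ((γ : V →ₗ[E] V) - LinearMap.id)) (diagEquiv E V)]
  rw [LinearMap.det_smul]

theorem quot_value (h2 : (2 : E) ≠ 0) [FiniteDimensional E V] {γ : V ≃ₗ[E] V} {X : V →ₗ[E] V}
    {h : (V × V) ≃ₗ[E] V × V}
    (hh : ∀ p : V × V, h p = (γ p.1 + X (γ p.1 - p.2), -(p.2 + X (γ p.1 - p.2))))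
    (hC : Cnd γ X)
    (hp : ∀ x : V × V, x ∈ diagSub E V ↔ h x ∈ diagSub E V) :
    detQuot (diagSub E V) h hp * LinearMap.det ((γ : V →ₗ[E] V) - LinearMap.id)
      = (-2 : E) ^ Module.finrank E V * LinearMap.det (γ : V →ₗ[E] V) := by
  set m : V →ₗ[E] V := (LinearMap.id + (2 : E) • X) ∘ₗ (γ : V →ₗ[E] V) with hm
  have key : Submodule.mapQ (diagSub E V) (diagSub E V) ((h : (V × V) ≃ₗ[E] V × V) : (V × V) →ₗ[E] V × V)
        (fun x hx => Submodule.mem_comap.mpr ((hp x).1 hx)) =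
      (↑(quotEquiv E V).symm : V →ₗ[E] ((V × V) ⧸ diagSub E V)) ∘ₗ
        m ∘ₗ (↑(quotEquiv E V) : ((V × V) ⧸ diagSub E V) →ₗ[E] V) := by
    apply Submodule.linearMap_qext
    apply LinearMap.ext
    intro p
    simp only [LinearMap.coe_comp, Function.comp_apply, Submodule.mkQ_apply,
      Submodule.mapQ_apply, LinearEquiv.coe_coe, quotEquiv_mk]
    rw [LinearEquiv.eq_symm_apply]
    rw [quotEquiv_mk]
    rw [hh]
    show γ p.1 + X (γ p.1 - p.2) - -(p.2 + X (γ p.1 - p.2)) = m (p.1 - p.2)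
    have hmp : m (p.1 - p.2) = γ (p.1 - p.2) + (2 : E) • X (γ (p.1 - p.2)) := by
      simp only [hm, LinearMap.coe_comp, Function.comp_apply, LinearEquiv.coe_coe,
        LinearMap.add_apply, LinearMap.id_coe, id_eq, LinearMap.smul_apply]
    rw [hmp, map_sub γ p.1 p.2]
    have hXsplit : X (γ p.1 - p.2) = X (γ p.1 - γ p.2) + X (γ p.2 - p.2) := by
      rw [← map_add]
      congr 1
      abel
    have hCp2 : γ p.2 + p.2 + (X (γ p.2 - p.2) + X (γ p.2 - p.2)) = 0 := by
      have h1 := hC p.2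
      rwa [two_smul] at h1
    rw [hXsplit, two_smul]
    calc γ p.1 + (X (γ p.1 - γ p.2) + X (γ p.2 - p.2)) -
          -(p.2 + (X (γ p.1 - γ p.2) + X (γ p.2 - p.2)))
        = (γ p.1 - γ p.2 + (X (γ p.1 - γ p.2) + X (γ p.1 - γ p.2))) +
          (γ p.2 + p.2 + (X (γ p.2 - p.2) + X (γ p.2 - p.2))) := by abel
      _ = γ p.1 - γ p.2 + (X (γ p.1 - γ p.2) + X (γ p.1 - γ p.2)) := by rw [hCp2, add_zero]
  have hdetm : detQuot (diagSub E V) h hp = LinearMap.det m := by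
    unfold Dbl.detQuot
    rw [key]
    exact LinearMap.det_conj m (quotEquiv E V).symm
  have hnf : m ∘ₗ ((γ : V →ₗ[E] V) - LinearMap.id) = (-2 : E) • (γ : V →ₗ[E] V) := by
    apply LinearMap.ext
    intro v
    simp only [LinearMap.coe_comp, Function.comp_apply, LinearMap.sub_apply,
      LinearMap.id_coe, id_eq, LinearEquiv.coe_coe, hm, LinearMap.add_apply,
      LinearMap.smul_apply]
    rw [map_sub]
    have hC2 : (2 : E) • X (γ (γ v) - γ v) = -(γ (γ v) + γ v) :=
      eq_neg_of_add_eq_zero_right (hC (γ v))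
    rw [hC2]
    have hneg2 : ((-2 : E)) • γ v = -(γ v + γ v) := by
      rw [neg_smul, two_smul]
    rw [hneg2]
    abel
  calc detQuot (diagSub E V) h hp * LinearMap.det ((γ : V →ₗ[E] V) - LinearMap.id)
      = LinearMap.det m * LinearMap.det ((γ : V →ₗ[E] V) - LinearMap.id) := by rw [hdetm]
    _ = LinearMap.det (m ∘ₗ ((γ : V →ₗ[E] V) - LinearMap.id)) :=
        (LinearMap.det_comp m _).symm
    _ = LinearMap.det ((-2 : E) • (γ : V →ₗ[E] V)) := by rw [hnf]
    _ = (-2 : E) ^ Module.finrank E V * LinearMap.det (γ : V →ₗ[E] V) :=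
        LinearMap.det_smul _ _

theorem sum_f0 {k : Type*} [Field k] [FiniteDimensional E V]
    (σ : E →+* E) (h2 : (2 : E) ≠ 0) (χ : E →* k)
    (f0 : ((V × V) ≃ₗ[E] (V × V)) → k)
    (hf0 : f0 = fun g : (V × V) ≃ₗ[E] (V × V) =>
      if h : (∀ x : V × V, x ∈ diagSub E V ↔ g x ∈ diagSub E V)
      then χ (detRes (diagSub E V) g h) * (χ (σ (detQuot (diagSub E V) g h)))⁻¹
      else 0)
    (γ : V ≃ₗ[E] V) (hfun : (V →ₗ[E] V) → ((V × V) ≃ₗ[E] (V × V)))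
    (hfam : ∀ (X : V →ₗ[E] V) (p : V × V),
      hfun X p = (γ p.1 + X (γ p.1 - p.2), -(p.2 + X (γ p.1 - p.2)))) :
    ∑ᶠ X : V →ₗ[E] V, f0 (hfun X) =
      if LinearMap.det ((γ : V →ₗ[E] V) - LinearMap.id) = 0 then 0 else
        χ ((2 : E)⁻¹ ^ Module.finrank E V * LinearMap.det ((γ : V →ₗ[E] V) - LinearMap.id)) *
        (χ (σ ((-2 : E) ^ Module.finrank E V * LinearMap.det (γ : V →ₗ[E] V) *
          (LinearMap.det ((γ : V →ₗ[E] V) - LinearMap.id))⁻¹)))⁻¹ := by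
  by_cases hdet : LinearMap.det ((γ : V →ₗ[E] V) - LinearMap.id) = 0
  · rw [if_pos hdet]
    apply finsum_eq_zero_of_forall_eq_zero
    intro X
    simp only [hf0]
    refine dif_neg ?_
    intro hs
    exact cnd_none h2 hdet X (cnd_of_stab (hfam X) hs)
  · rw [if_neg hdet]
    obtain ⟨X₀, hX₀⟩ := cnd_unique h2 γ hdet
    have hC0 : Cnd γ X₀ := (hX₀ X₀).mpr rfl
    rw [finsum_eq_single _ X₀ ?_]
    · have hs : ∀ x : V × V, x ∈ diagSub E V ↔ hfun X₀ x ∈ diagSub E V :=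
        stab_of_cnd h2 (hfam X₀) hC0
      simp only [hf0]
      rw [dif_pos hs]
      rw [res_value h2 (hfam X₀) hC0 hs]
      have hq := quot_value h2 (hfam X₀) hC0 hs
      have hqv : detQuot (diagSub E V) (hfun X₀) hs =
          (-2 : E) ^ Module.finrank E V * LinearMap.det (γ : V →ₗ[E] V) *
            (LinearMap.det ((γ : V →ₗ[E] V) - LinearMap.id))⁻¹ :=
        (eq_mul_inv_iff_mul_eq₀ hdet).mpr hq
      rw [hqv]
    · intro X hX
      simp only [hf0]
      refine dif_neg ?_
      intro hs
      exact hX ((hX₀ X).mp (cnd_of_stab (hfam X) hs))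

theorem chi_inv_of_ne {k : Type*} [Field k] (χ : E →* k) {x : E} (hx : x ≠ 0) :
    χ x⁻¹ = (χ x)⁻¹ :=
  eq_inv_of_mul_eq_one_left (by rw [← map_mul, inv_mul_cancel₀ hx, map_one])

theorem chi_ne_zero {k : Type*} [Field k] (χ : E →* k) {x : E} (hx : x ≠ 0) : χ x ≠ 0 := by
  have h1 : χ x * χ x⁻¹ = 1 := by rw [← map_mul, mul_inv_cancel₀ hx, map_one]
  exact left_ne_zero_of_mul_eq_one h1

theorem scalar_key {k : Type*} [Field k] (σ : E →+* E) (χ : E →* k) (h2 : (2 : E) ≠ 0)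
    (n : ℕ) (Δ Dg : E) (hΔ : Δ ≠ 0) (hDg : Dg ≠ 0) :
    χ ((2 : E)⁻¹ ^ n * ((-1 : E) ^ n * Δ)) *
      (χ (σ ((-2 : E) ^ n * ((-1 : E) ^ n * Dg) * ((-1 : E) ^ n * Δ)⁻¹)))⁻¹
    = (χ 4)⁻¹ ^ n * (χ Δ * χ (σ Δ) * (χ (σ Dg))⁻¹) := by
  have h1 : ((-1 : E) ^ n) ≠ 0 := pow_ne_zero _ (by norm_num)
  have e1 : (-2 : E) ^ n * ((-1 : E) ^ n * Dg) * ((-1 : E) ^ n * Δ)⁻¹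
      = (-2 : E) ^ n * Dg * Δ⁻¹ := by
    field_simp
  rw [e1]
  have hσΔ : σ Δ ≠ 0 := fun hc => hΔ (σ.injective (by rw [hc, map_zero]))
  have hσDg : σ Dg ≠ 0 := fun hc => hDg (σ.injective (by rw [hc, map_zero]))
  have hσ2 : σ (-2 : E) = -2 := by rw [map_neg, map_ofNat]
  have hσ : σ ((-2 : E) ^ n * Dg * Δ⁻¹) = (-2 : E) ^ n * σ Dg * (σ Δ)⁻¹ := by
    rw [map_mul, map_mul, map_pow, map_inv₀, hσ2]
  rw [hσ]
  simp only [map_mul, map_pow]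
  rw [chi_inv_of_ne χ hσΔ]
  rw [show χ ((2 : E)⁻¹) = (χ 2)⁻¹ from chi_inv_of_ne χ h2]
  have hm2 : χ (-2 : E) = χ (-1) * χ 2 := by
    rw [← map_mul]
    norm_num
  have h4 : χ (4 : E) = χ 2 * χ 2 := by
    rw [← map_mul]
    norm_num
  have hA : χ (2 : E) ≠ 0 := chi_ne_zero χ h2
  have hB : χ (-1 : E) * χ (-1 : E) = 1 := by
    rw [← map_mul]
    norm_num
  have hBn : χ (-1 : E) ^ n * χ (-1 : E) ^ n = 1 := by
    rw [← mul_pow, hB, one_pow]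
  have hD : χ (σ Δ) ≠ 0 := chi_ne_zero χ hσΔ
  have hF : χ (σ Dg) ≠ 0 := chi_ne_zero χ hσDg
  have hBinv : (χ (-1 : E))⁻¹ = χ (-1 : E) := inv_eq_of_mul_eq_one_right hB
  rw [hm2, h4]
  rw [mul_pow (χ (-1 : E)) (χ 2)]
  simp only [mul_inv, inv_inv, ← inv_pow]
  rw [hBinv]
  linear_combination ((χ 2)⁻¹ ^ n * (χ 2)⁻¹ ^ n * χ Δ * χ (σ Δ) * (χ (σ Dg))⁻¹) * hBn
end SDbl

/-- STATEMENT 12: explicit computation of the dual doubling zeta operator at the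
special section `f₀` for a `d`-dimensional space with identically zero form
(so `Isom(V) = GL_E(V)`). -/
theorem statement12
    {E : Type*} [Field E] [Finite E] (σ : E →+* E) (hinv : ∀ x : E, σ (σ x) = x)
    (h2 : (2 : E) ≠ 0)
    {V : Type*} [AddCommGroup V] [Module E V] [FiniteDimensional E V]
    (d : ℕ) (hd : d = Module.finrank E V)
    {k : Type*} [Field k] [IsAlgClosed k] (hq : (Nat.card E : k) ≠ 0)
    (χ : E →* k)
    {Wπ : Type*} [AddCommGroup Wπ] [Module k Wπ] [FiniteDimensional k Wπ]
    (π : Representation k (V ≃ₗ[E] V) Wπ) (hπ : Dbl.RepIrred π)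
    (negg : V ≃ₗ[E] V) (hnegg : ∀ v : V, negg v = -v)
    (ω : k) (hω : π negg = ω • (LinearMap.id : Wπ →ₗ[k] Wπ))
    -- the fixed square root of `|End_E(V)|`
    (r : k) (hr : r * r = (Nat.card (V →ₗ[E] V) : k))
    -- the Weyl element `w = i(id_V, -id_V)`
    (wey : (V × V) ≃ₗ[E] (V × V)) (hwey : ∀ v : V × V, wey v = (v.1, -v.2))
    -- the special section `f₀ ∈ I^V(χ)` (zero-form degenerate principal series)
    (f0 : ((V × V) ≃ₗ[E] (V × V)) → k)
    (hf0 : f0 = fun g : (V × V) ≃ₗ[E] (V × V) =>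
      if h : (∀ x : V × V, x ∈ Dbl.diagSub E V ↔ g x ∈ Dbl.diagSub E V)
      then χ (Dbl.detRes (Dbl.diagSub E V) g h) *
        (χ (σ (Dbl.detQuot (Dbl.diagSub E V) g h)))⁻¹
      else 0)
    -- the unipotent radical `N^Δ` of the Siegel parabolic
    (NΔ : Set ((V × V) ≃ₗ[E] (V × V)))
    (hNΔ : NΔ = {u : (V × V) ≃ₗ[E] (V × V) |
      (∀ v ∈ Dbl.diagSub E V, u v = v) ∧
      (∀ v : V × V, u v - v ∈ Dbl.diagSub E V)})
    -- the intertwining operator applied to `f₀`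
    (Mf0 : ((V × V) ≃ₗ[E] (V × V)) → k)
    (hMf0 : Mf0 = fun g => r⁻¹ * ∑ᶠ u ∈ NΔ, f0 (wey * u * g))
    -- the twisted Jacobi sum operator `J^{dbl}(π ⊗ χ^{-c}∘det, χ^{1+c})` and its scalar
    (Jtw : Wπ →ₗ[k] Wπ)
    (hJtw : Jtw = r⁻¹ • ∑ᶠ g : V ≃ₗ[E] V,
      (if LinearMap.det (LinearMap.id + (g : V →ₗ[E] V)) ≠ 0
       then χ (LinearMap.det (LinearMap.id + (g : V →ₗ[E] V))) *
         χ (σ (LinearMap.det (LinearMap.id + (g : V →ₗ[E] V))))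
       else 0) • ((χ (σ (Dbl.detE g)))⁻¹ • π g))
    (j' : k) (hj' : Jtw = j' • (LinearMap.id : Wπ →ₗ[k] Wπ)) :
    (∑ᶠ g : V ≃ₗ[E] V, Mf0 ((g.prodCongr (1 : V ≃ₗ[E] V))) • π g) =
      (ω * (χ 4)⁻¹ ^ d) • (r⁻¹ • ∑ᶠ g : V ≃ₗ[E] V,
        (if LinearMap.det (LinearMap.id + (g : V →ₗ[E] V)) ≠ 0
         then χ (LinearMap.det (LinearMap.id + (g : V →ₗ[E] V))) *
           χ (σ (LinearMap.det (LinearMap.id + (g : V →ₗ[E] V)))) *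
           (χ (σ (Dbl.detE g)))⁻¹
         else 0) • π g) ∧
    (∑ᶠ g : V ≃ₗ[E] V, Mf0 ((g.prodCongr (1 : V ≃ₗ[E] V))) • π g) =
      (ω * (χ 4)⁻¹ ^ d * j') • (LinearMap.id : Wπ →ₗ[k] Wπ) := by
  have hfinV : Finite V := Module.finite_of_finite E
  have hfinG : Finite (V ≃ₗ[E] V) :=
    Finite.of_injective (fun g : V ≃ₗ[E] V => (g : V → V)) DFunLike.coe_injective
  letI : Fintype (V ≃ₗ[E] V) := Fintype.ofFinite _
  -- coercion of `negg * γ`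
  have hnegcoe : ∀ γ : V ≃ₗ[E] V, ((negg * γ : V ≃ₗ[E] V) : V →ₗ[E] V)
      = (-1 : E) • (γ : V →ₗ[E] V) := by
    intro γ
    apply LinearMap.ext
    intro v
    rw [LinearEquiv.coe_coe, SDbl.lmul_apply, hnegg]
    rw [LinearMap.smul_apply, LinearEquiv.coe_coe, neg_one_smul]
  -- determinants of equivalences are nonzero
  have hdetG : ∀ γ : V ≃ₗ[E] V, LinearMap.det (γ : V →ₗ[E] V) ≠ 0 := by
    intro γ
    have hcomp : (γ : V →ₗ[E] V) ∘ₗ (γ.symm : V →ₗ[E] V) = LinearMap.id := by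
      apply LinearMap.ext
      intro v
      simp
    have h1 : LinearMap.det (γ : V →ₗ[E] V) * LinearMap.det (γ.symm : V →ₗ[E] V) = 1 := by
      rw [← LinearMap.det_comp, hcomp, LinearMap.det_id]
    exact left_ne_zero_of_mul_eq_one h1
  -- the intertwining operator at `γ.prodCongr 1`
  have hM : ∀ γ : V ≃ₗ[E] V, Mf0 (γ.prodCongr 1) =
      r⁻¹ * (if LinearMap.det ((γ : V →ₗ[E] V) - LinearMap.id) = 0 then 0 else
        χ ((2 : E)⁻¹ ^ Module.finrank E V * LinearMap.det ((γ : V →ₗ[E] V) - LinearMap.id)) *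
        (χ (σ ((-2 : E) ^ Module.finrank E V * LinearMap.det (γ : V →ₗ[E] V) *
          (LinearMap.det ((γ : V →ₗ[E] V) - LinearMap.id))⁻¹)))⁻¹) := by
    intro γ
    rw [hMf0]
    beta_reduce
    congr 1
    rw [hNΔ]
    rw [show {u : (V × V) ≃ₗ[E] (V × V) | (∀ v ∈ Dbl.diagSub E V, u v = v) ∧
        (∀ v : V × V, u v - v ∈ Dbl.diagSub E V)}
      = Set.range (SDbl.uEquiv : (V →ₗ[E] V) → ((V × V) ≃ₗ[E] V × V)) from SDbl.NDelta_eq]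
    rw [finsum_mem_range SDbl.uEquiv_injective]
    refine SDbl.sum_f0 σ h2 χ f0 hf0 γ _ ?_
    intro X p
    rw [SDbl.lmul_apply, SDbl.lmul_apply]
    rw [show ((γ.prodCongr (1 : V ≃ₗ[E] V)) p : V × V) = (γ p.1, p.2) from by
      rw [LinearEquiv.prodCongr_apply]; rfl]
    rw [SDbl.uEquiv_apply]
    rw [hwey]
  -- main computation
  have key : (∑ᶠ g : V ≃ₗ[E] V, Mf0 ((g.prodCongr (1 : V ≃ₗ[E] V))) • π g) =
      (ω * (χ 4)⁻¹ ^ d) • (r⁻¹ • ∑ᶠ g : V ≃ₗ[E] V,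
        (if LinearMap.det (LinearMap.id + (g : V →ₗ[E] V)) ≠ 0
         then χ (LinearMap.det (LinearMap.id + (g : V →ₗ[E] V))) *
           χ (σ (LinearMap.det (LinearMap.id + (g : V →ₗ[E] V)))) *
           (χ (σ (Dbl.detE g)))⁻¹
         else 0) • π g) := by
    rw [finsum_eq_sum_of_fintype]
    rw [finsum_eq_sum_of_fintype]
    rw [← Equiv.sum_comp (Equiv.mulLeft negg)
      (fun g : V ≃ₗ[E] V => Mf0 ((g.prodCongr (1 : V ≃ₗ[E] V))) • π g)]
    rw [smul_smul, Finset.smul_sum]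
    apply Finset.sum_congr rfl
    intro γ _
    simp only [Equiv.coe_mulLeft]
    have hπ2 : π (negg * γ) = ω • π γ := by
      rw [map_mul, hω, smul_mul_assoc, Module.End.mul_eq_comp, LinearMap.id_comp]
    rw [hM (negg * γ), hπ2]
    have hf' : ((negg * γ : V ≃ₗ[E] V) : V →ₗ[E] V) - LinearMap.id
        = (-1 : E) • (LinearMap.id + (γ : V →ₗ[E] V)) := by
      rw [hnegcoe γ, smul_add, neg_one_smul E (LinearMap.id : V →ₗ[E] V)]
      abel
    rw [hf', hnegcoe γ]
    rw [LinearMap.det_smul, LinearMap.det_smul]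
    have hm1 : ((-1 : E) ^ Module.finrank E V) ≠ 0 := pow_ne_zero _ (by norm_num)
    by_cases hΔ : LinearMap.det (LinearMap.id + (γ : V →ₗ[E] V)) = 0
    · rw [if_pos (by rw [hΔ, mul_zero]), if_neg (fun hne => hne hΔ)]
      simp
    · rw [if_neg (mul_ne_zero hm1 hΔ), if_pos hΔ]
      rw [smul_smul, smul_smul]
      congr 1
      rw [SDbl.scalar_key σ χ h2 (Module.finrank E V)
        (LinearMap.det (LinearMap.id + (γ : V →ₗ[E] V)))
        (LinearMap.det (γ : V →ₗ[E] V)) hΔ (hdetG γ)]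
      simp only [Dbl.detE]
      rw [hd]
      ring
  refine ⟨key, ?_⟩
  rw [key]
  have hS : (r⁻¹ • ∑ᶠ g : V ≃ₗ[E] V,
      (if LinearMap.det (LinearMap.id + (g : V →ₗ[E] V)) ≠ 0
       then χ (LinearMap.det (LinearMap.id + (g : V →ₗ[E] V))) *
         χ (σ (LinearMap.det (LinearMap.id + (g : V →ₗ[E] V)))) *
         (χ (σ (Dbl.detE g)))⁻¹
       else 0) • π g) = Jtw := by
    rw [hJtw]
    congr 1
    apply finsum_congr
    intro g
    rw [smul_smul, ite_mul, zero_mul]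
  rw [hS, hj', smul_smul]
end
end
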